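/- arXiv:2002.03426 — 10 statements merged into one kernel-verified Lean document; each statement's English description precedes it below -/
import Mathlib

section
/- For the Virasoro algebra Vir with basis {L_n, C : n ∈ ℤ} and brackets [L_m, L_n] = (n−m)L_{m+n} + δ_{m+n,0}·((m³−m)/12)·C, [C, L_m] = 0, and for any nonzero integer n and nonzero complex number a, the linear map φ_n∘τ_a defined by L_i ↦ (a^i/n)(L_{ni} − δ_{i,0}·((n²−1)/24)·C) and C ↦ nC is a Lie algebra endomorphism of Vir. -/
/-
Both sides of `f ⁅x, y⁆ = ⁅f x, f y⁆` are bilinear in `(x, y)`, so it suffices to check it on the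
basis `{L_i} ∪ {C}`. Since `C` is central, the correction terms in `f (L_i)` drop out of brackets,
and the relation on `L_i, L_j` reduces to a scalar identity: the `L_{n(i+j)}` coefficients agree
because `a^i a^j = a^{i+j}`, and for `i + j = 0` the `C` coefficients agree thanks to the shift of
`L_0` by `(n² - 1)/24`.
-/

/-- The defining bracket relations of the Virasoro algebra on a family `L : ℤ → V`
and a central element `C`. -/
def VirRel {V : Type*} [LieRing V] [LieAlgebra ℂ V] (L : ℤ → V) (C : V) : Prop :=
  (∀ m n : ℤ, ⁅L m, L n⁆ = ((n : ℂ) - (m : ℂ)) • L (m + n)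
      + (if m + n = 0 then ((m : ℂ) ^ 3 - (m : ℂ)) / 12 else 0) • C) ∧
  ∀ m : ℤ, ⁅C, L m⁆ = 0

/-- `f` has the values of `φ_n ∘ τ_a` on the basis:
`f(L_i) = (a^i/n)(L_{ni} - δ_{i,0}((n²-1)/24)C)` and `f(C) = nC`. -/
def PhiTau {V : Type*} [LieRing V] [LieAlgebra ℂ V] (L : ℤ → V) (C : V)
    (n : ℤ) (a : ℂ) (f : V →ₗ[ℂ] V) : Prop :=
  (∀ i : ℤ, f (L i) = (a ^ i / (n : ℂ)) •
      (L (n * i) - (if i = 0 then ((n : ℂ) ^ 2 - 1) / 24 else 0) • C)) ∧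
  f C = (n : ℂ) • C

theorem LinearMap.map_lie_of_basis {ι R L L' : Type*} [CommRing R] [LieRing L] [LieAlgebra R L]
    [LieRing L'] [LieAlgebra R L'] (b : Module.Basis ι R L) (f : L →ₗ[R] L')
    (h : ∀ i j, f ⁅b i, b j⁆ = ⁅f (b i), f (b j)⁆) (x y : L) : f ⁅x, y⁆ = ⁅f x, f y⁆ :=
  LinearMap.congr_fun₂ (LinearMap.ext_basis b b h :
    (LieModule.toEnd R L L : L →ₗ[R] Module.End R L).compr₂ f =
      (LieModule.toEnd R L' L' : L' →ₗ[R] Module.End R L').compl₁₂ f f) x y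

section Virasoro

variable {V : Type*} [LieRing V] [LieAlgebra ℂ V] {L : ℤ → V} {C : V}

theorem VirRel.lie_L_C (hrel : VirRel L C) (i : ℤ) : ⁅L i, C⁆ = 0 := by
  rw [← lie_skew, hrel.2 i, neg_zero]

theorem VirRel.lie_sub_smul_C (hrel : VirRel L C) (i j : ℤ) (s t : ℂ) :
    ⁅L i - s • C, L j - t • C⁆ = ⁅L i, L j⁆ := by
  simp only [lie_sub, sub_lie, lie_smul, smul_lie, hrel.2, hrel.lie_L_C, lie_self, smul_zero,
    sub_zero]

theorem VirRel.lie_C_sub_smul_C (hrel : VirRel L C) (j : ℤ) (t : ℂ) :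
    ⁅C, L j - t • C⁆ = 0 := by
  rw [lie_sub, lie_smul, hrel.2, lie_self, smul_zero, sub_zero]

variable {n : ℤ} {a : ℂ} {f : V →ₗ[ℂ] V}

theorem PhiTau.map_lie_L_L (hrel : VirRel L C) (hn : n ≠ 0) (ha : a ≠ 0)
    (hf : PhiTau L C n a f) (i j : ℤ) : f ⁅L i, L j⁆ = ⁅f (L i), f (L j)⁆ := by
  have hnC : (n : ℂ) ≠ 0 := Int.cast_ne_zero.mpr hn
  rw [hf.1 i, hf.1 j, lie_smul, smul_lie, hrel.lie_sub_smul_C, hrel.1, hrel.1, map_add, map_smul,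
    map_smul, hf.1, hf.2, ← mul_add]
  by_cases h : i + j = 0
  · obtain rfl : j = -i := by omega
    -- central part: `n (i³ - i)/12 + 2i (n² - 1)/(24 n) = ((n i)³ - n i)/(12 n²)`
    simp only [h, mul_zero, if_true, zpow_zero, zpow_neg]
    match_scalars
    · field_simp
    · field_simp
      ring
  · simp only [if_neg h, if_neg (mul_ne_zero hn h), zero_smul, add_zero, sub_zero]
    match_scalars
    rw [zpow_add₀ ha]
    field_simp

theorem PhiTau.map_lie_C_L (hrel : VirRel L C) (hf : PhiTau L C n a f) (j : ℤ) :
    f ⁅C, L j⁆ = ⁅f C, f (L j)⁆ := by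
  rw [hrel.2, map_zero, hf.2, hf.1, smul_lie, lie_smul, hrel.lie_C_sub_smul_C, smul_zero, smul_zero]

theorem PhiTau.map_lie_L_C (hrel : VirRel L C) (hf : PhiTau L C n a f) (i : ℤ) :
    f ⁅L i, C⁆ = ⁅f (L i), f C⁆ := by
  rw [← lie_skew, map_neg, hf.map_lie_C_L hrel, ← lie_skew (f C), neg_neg]

end Virasoro

/-- the linear map `φ_n ∘ τ_a` is a Lie algebra endomorphism of the
Virasoro algebra, for `n ∈ ℤ*`, `a ∈ ℂ*`. -/
theorem stmt_3 {V : Type*} [LieRing V] [LieAlgebra ℂ V]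
    (L : ℤ → V) (C : V)
    (b : Module.Basis (Option ℤ) ℂ V) (hbL : ∀ i : ℤ, b (some i) = L i) (hbC : b none = C)
    (hrel : VirRel L C)
    (n : ℤ) (hn : n ≠ 0) (a : ℂ) (ha : a ≠ 0)
    (f : V →ₗ[ℂ] V) (hf : PhiTau L C n a f) :
    ∀ x y : V, f ⁅x, y⁆ = ⁅f x, f y⁆ := by
  refine f.map_lie_of_basis b ?_
  rintro (_ | i) (_ | j) <;> simp only [hbL, hbC]
  · rw [lie_self, lie_self, map_zero]
  · exact hf.map_lie_C_L hrel j
  · exact hf.map_lie_L_C hrel i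
  · exact hf.map_lie_L_L hrel hn ha i j
end

section
/- Let M = M(h,c) be the Verma module of highest weight (h,c) over the Virasoro algebra and (M,δ) a 1-differential module over (Vir, d_{n,a}) with δ ≠ −id_M, where n is a nonzero integer and a ∈ ℂ*. Then (n−1)c = 0, the vector u := (δ + id)(v₀) is a nonzero element of the weight space M_{(n−1)h} (so (1−n)h ∈ ℤ_{≥0}), and L_{ni}·u = 0 for all positive integers i (u is an n-singular vector). -/
namespace Module.End

variable {R M : Type*} [CommRing R] [AddCommGroup M] [Module R M]

theorem apply_eq_smul_of_mem_span {T : Module.End R M} {S : Set M} {c : R}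
    (hS : ∀ w ∈ S, T w = c • w) {u : M} (hu : u ∈ Submodule.span R S) : T u = c • u :=
  mem_eigenspace_iff.mp <|
    Submodule.span_le.mpr (fun w hw => mem_eigenspace_iff.mpr (hS w hw)) hu

theorem mem_of_mem_span_eigenvectors [IsDomain R] [Module.IsTorsionFree R M]
    {T : Module.End R M} {S : Set M} {Λ : Set R} (hS : ∀ w ∈ S, ∃ l ∈ Λ, T w = l • w)
    {u : M} (hu : u ∈ Submodule.span R S) (hu0 : u ≠ 0) {μ : R} (hμ : T u = μ • u) :
    μ ∈ Λ := by
  by_contra hμΛ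
  have hspan : Submodule.span R S ≤ ⨆ (l : R) (_ : l ≠ μ), T.eigenspace l := by
    refine Submodule.span_le.mpr fun w hw => ?_
    obtain ⟨l, hl, hTw⟩ := hS w hw
    exact (le_iSup₂ (f := fun (l : R) (_ : l ≠ μ) => T.eigenspace l) l
      (fun h => hμΛ (h ▸ hl))) (mem_eigenspace_iff.mpr hTw)
  exact hu0 <| Submodule.disjoint_def.mp (iSupIndep_def.mp T.eigenspaces_iSupIndep μ) u
    (mem_eigenspace_iff.mpr hμ) (hspan hu)

end Module.End

section TwistedEquivariant

variable {R V M : Type*} [CommRing R] [LieRing V] [LieAlgebra R V]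
  [AddCommGroup M] [Module R M] [LieRingModule V M]
  {f : V →ₗ[R] V} {g : M →ₗ[R] M}

theorem add_id_lie_eq_of_differential {δ : M →ₗ[R] M}
    (hdm : ∀ (x : V) (m : M), δ ⁅x, m⁆ = ⁅f x - x, m⁆ + ⁅x, δ m⁆ + ⁅f x - x, δ m⁆)
    (x : V) (m : M) :
    (δ + LinearMap.id : M →ₗ[R] M) ⁅x, m⁆ = ⁅f x, (δ + LinearMap.id : M →ₗ[R] M) m⁆ := by
  simp only [LinearMap.add_apply, LinearMap.id_apply, hdm, sub_lie, lie_add]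
  abel

def twistedEquivariantKer (hg : ∀ (x : V) (m : M), g ⁅x, m⁆ = ⁅f x, g m⁆) :
    LieSubmodule R V M :=
  { LinearMap.ker g with
    lie_mem := fun {x m} (hm : g m = 0) => show g ⁅x, m⁆ = 0 by rw [hg, hm, lie_zero] }

theorem eq_zero_of_apply_generator_eq_zero (hg : ∀ (x : V) (m : M), g ⁅x, m⁆ = ⁅f x, g m⁆)
    {v : M} (hgen : ∀ N : LieSubmodule R V M, v ∈ N → ∀ m : M, m ∈ N) (hv : g v = 0) :
    g = 0 :=
  LinearMap.ext fun m => hgen (twistedEquivariantKer hg) hv m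

theorem smul_lie_apply_of_lie_eq_smul [LieModule R V M]
    (hg : ∀ (x : V) (m : M), g ⁅x, m⁆ = ⁅f x, g m⁆)
    {x y : V} {v : M} {t μ : R} (hxv : ⁅x, v⁆ = μ • v) (hfx : f x = t • y) :
    t • ⁅y, g v⁆ = μ • g v := by
  rw [← smul_lie, ← hfx, ← hg, hxv, map_smul]

end TwistedEquivariant

theorem stmt_11_general {V : Type*} [LieRing V] [LieAlgebra ℂ V]
    (L : ℤ → V) (C : V)
    {M : Type*} [AddCommGroup M] [Module ℂ M] [LieRingModule V M] [LieModule ℂ V M]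
    (h c : ℂ) (v₀ : M)
    -- highest weight vector of weight (h,c):
    (hw0 : ⁅L 0, v₀⁆ = h • v₀) (hwC : ⁅C, v₀⁆ = c • v₀)
    (hwpos : ∀ i : ℤ, 0 < i → ⁅L i, v₀⁆ = 0)
    -- M is generated by v₀ :
    (hgen : ∀ N : LieSubmodule ℂ V M, v₀ ∈ N → ∀ m : M, m ∈ N)
    -- M is the sum of its weight spaces M_{-k}, k ∈ ℤ₊ :
    (hdec : ∀ m : M, m ∈ Submodule.span ℂ
      {w : M | ∃ k : ℕ, ⁅L 0, w⁆ = (h - (k : ℂ)) • w ∧ ⁅C, w⁆ = c • w})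
    (n : ℤ) (hn : n ≠ 0) (a : ℂ) (ha : a ≠ 0)
    (f : V →ₗ[ℂ] V) (hf : PhiTau L C n a f)
    (δ : M →ₗ[ℂ] M) (hδ : δ ≠ -(LinearMap.id : M →ₗ[ℂ] M))
    -- (M,δ) is a 1-differential module over (Vir, d_{n,a}) with d_{n,a} = f - id :
    (hdm : ∀ (x : V) (m : M),
      δ ⁅x, m⁆ = ⁅f x - x, m⁆ + ⁅x, δ m⁆ + ⁅f x - x, δ m⁆) :
    ((n : ℂ) - 1) * c = 0 ∧
    δ v₀ + v₀ ≠ 0 ∧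
    ⁅L 0, δ v₀ + v₀⁆ = ((n : ℂ) * h) • (δ v₀ + v₀) ∧
    ⁅C, δ v₀ + v₀⁆ = c • (δ v₀ + v₀) ∧
    (∃ k : ℕ, (1 - (n : ℂ)) * h = (k : ℂ)) ∧
    ∀ i : ℤ, 0 < i → ⁅L (n * i), δ v₀ + v₀⁆ = 0 := by
  obtain ⟨hfL, hfC⟩ := hf
  have hn' : (n : ℂ) ≠ 0 := Int.cast_ne_zero.mpr hn
  have hg := add_id_lie_eq_of_differential hdm
  have hu : δ v₀ + v₀ ≠ 0 := fun hv =>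
    hδ (eq_neg_of_add_eq_zero_left (eq_zero_of_apply_generator_eq_zero hg hgen hv))
  have hCu : ⁅C, δ v₀ + v₀⁆ = c • (δ v₀ + v₀) :=
    Module.End.apply_eq_smul_of_mem_span (T := LieModule.toEnd ℂ V M C)
      (by rintro w ⟨-, -, hw⟩; exact hw) (hdec _)
  have hc : ((n : ℂ) - 1) * c = 0 := by
    have hC := smul_lie_apply_of_lie_eq_smul hg hwC hfC
    rw [LinearMap.add_apply, LinearMap.id_apply, hCu, smul_smul, ← sub_eq_zero, ← sub_smul,
      smul_eq_zero] at hC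
    exact hC.elim (fun h0 => by linear_combination h0) (absurd · hu)
  have hL0u : ⁅L 0, δ v₀ + v₀⁆ = ((n : ℂ) * h) • (δ v₀ + v₀) := by
    have hL0 := smul_lie_apply_of_lie_eq_smul hg hw0 (by rw [hfL 0, if_pos rfl])
    rw [LinearMap.add_apply, LinearMap.id_apply, sub_lie, smul_lie, hCu, smul_smul,
      show ((n : ℂ) ^ 2 - 1) / 24 * c = 0 by linear_combination ((n : ℂ) + 1) / 24 * hc,
      zero_smul, sub_zero, zpow_zero, mul_zero] at hL0
    rw [mul_smul, ← hL0, smul_smul, mul_one_div_cancel hn', one_smul]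
  refine ⟨hc, hu, hL0u, hCu, ?_, fun i hi => ?_⟩
  · obtain ⟨k, hk⟩ := Module.End.mem_of_mem_span_eigenvectors
      (T := LieModule.toEnd ℂ V M (L 0)) (Λ := Set.range fun k : ℕ => h - k)
      (by rintro w ⟨k, hw, -⟩; exact ⟨_, ⟨k, rfl⟩, hw⟩) (hdec _) hu hL0u
    exact ⟨k, by linear_combination hk⟩
  · have hLi := smul_lie_apply_of_lie_eq_smul hg (μ := 0)
      (by rw [hwpos i hi, zero_smul]) (hfL i)
    rw [if_neg hi.ne', zero_smul, sub_zero, zero_smul, smul_eq_zero] at hLi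
    exact hLi.resolve_left (div_ne_zero (zpow_ne_zero i ha) hn')

/-- for a 1-differential module structure `δ ≠ -id` on the Verma
module `M(h,c)` over `(Vir, d_{n,a})`, one has `(n-1)c = 0`, the vector
`u = (δ+id)v₀` is a nonzero vector of weight `nh` (i.e. `u ∈ M_{(n-1)h}`, so that
`(1-n)h ∈ ℤ₊`), and `u` is an `n`-singular vector. -/
theorem stmt_11 {V : Type*} [LieRing V] [LieAlgebra ℂ V]
    (L : ℤ → V) (C : V)
    (b : Module.Basis (Option ℤ) ℂ V) (hbL : ∀ i : ℤ, b (some i) = L i) (hbC : b none = C)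
    (hrel : VirRel L C)
    {M : Type*} [AddCommGroup M] [Module ℂ M] [LieRingModule V M] [LieModule ℂ V M]
    (h c : ℂ) (v₀ : M) (hv₀ : v₀ ≠ 0)
    -- highest weight vector of weight (h,c):
    (hw0 : ⁅L 0, v₀⁆ = h • v₀) (hwC : ⁅C, v₀⁆ = c • v₀)
    (hwpos : ∀ i : ℤ, 0 < i → ⁅L i, v₀⁆ = 0)
    -- M is generated by v₀ :
    (hgen : ∀ N : LieSubmodule ℂ V M, v₀ ∈ N → ∀ m : M, m ∈ N)
    -- M is the sum of its weight spaces M_{-k}, k ∈ ℤ₊ :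
    (hdec : ∀ m : M, m ∈ Submodule.span ℂ
      {w : M | ∃ k : ℕ, ⁅L 0, w⁆ = (h - (k : ℂ)) • w ∧ ⁅C, w⁆ = c • w})
    (n : ℤ) (hn : n ≠ 0) (a : ℂ) (ha : a ≠ 0)
    (f : V →ₗ[ℂ] V) (hf : PhiTau L C n a f)
    (δ : M →ₗ[ℂ] M) (hδ : δ ≠ -(LinearMap.id : M →ₗ[ℂ] M))
    -- (M,δ) is a 1-differential module over (Vir, d_{n,a}) with d_{n,a} = f - id :
    (hdm : ∀ (x : V) (m : M),
      δ ⁅x, m⁆ = ⁅f x - x, m⁆ + ⁅x, δ m⁆ + ⁅f x - x, δ m⁆) :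
    ((n : ℂ) - 1) * c = 0 ∧
    δ v₀ + v₀ ≠ 0 ∧
    ⁅L 0, δ v₀ + v₀⁆ = ((n : ℂ) * h) • (δ v₀ + v₀) ∧
    ⁅C, δ v₀ + v₀⁆ = c • (δ v₀ + v₀) ∧
    (∃ k : ℕ, (1 - (n : ℂ)) * h = (k : ℂ)) ∧
    ∀ i : ℤ, 0 < i → ⁅L (n * i), δ v₀ + v₀⁆ = 0 :=
  stmt_11_general L C h c v₀ hw0 hwC hwpos hgen hdec n hn a ha f hf δ hδ hdm
end

section
/- Let M = M(h,c) be the Verma module over the Virasoro algebra and (M,δ) a 1-differential module over (Vir, d_{1,a}) with a ∈ ℂ* and δ ≠ −id_M. Then there exists ξ ∈ ℂ such that δ(v) = (ξa^{−i} − 1)v for every v in the weight space M_{−i}, for all i ∈ ℤ_{≥0}. -/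
/-! With `D = id + δ` the 1-differential identity says `D ⁅x, m⁆ = ⁅(d_{1,a} + id) x, D m⁆`, i.e.
`D ⁅L j, m⁆ = a ^ j • ⁅L j, D m⁆`. The Verma module is spanned by the words
`L j₁ ⋯ L jₖ v₀` with all `jᵢ < 0` (their span is a Lie submodule by the Virasoro relations), and
such a word has `L 0`-weight `h + ∑ jᵢ`. As `D` commutes with `L 0`, `D v₀` lies in the weight-`h`
space, which is spanned by `v₀`, so `D v₀ = ξ • v₀`. Then `D` multiplies every word of weight
`h - i` by `ξ * a ^ (-i)`, and by independence of eigenspaces every vector of weight `h - i` is a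
combination of such words. -/

open Submodule Set

theorem Module.End.mem_span_image_of_apply_eq_smul {K M ι : Type*} [Field K] [AddCommGroup M]
    [Module K M] (T : Module.End K M) (w : ι → M) (wt : ι → K) (hw : ∀ i, T (w i) = wt i • w i)
    {μ : K} {v : M} (hv : v ∈ span K (range w)) (hTv : T v = μ • v) :
    v ∈ span K (w '' {i | wt i = μ}) := by
  have hle : span K (range w) ≤
      span K (w '' {i | wt i = μ}) ⊔ ⨆ ν ∈ {ν | ν ≠ μ}, T.eigenspace ν := by
    rw [span_le]
    rintro _ ⟨i, rfl⟩
    by_cases hi : wt i = μ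
    · exact mem_sup_left (subset_span ⟨i, hi, rfl⟩)
    · exact mem_sup_right
        (le_biSup (fun ν => T.eigenspace ν) hi (T.mem_eigenspace_iff.mpr (hw i)))
  obtain ⟨y, hy, z, hz, rfl⟩ := mem_sup.mp (hle hv)
  have hyμ : y ∈ T.eigenspace μ := by
    refine (span_le.mpr ?_) hy
    rintro _ ⟨i, hi, rfl⟩
    exact T.mem_eigenspace_iff.mpr (hi ▸ hw i)
  have hzμ : z ∈ T.eigenspace μ := by
    simpa using sub_mem (T.mem_eigenspace_iff.mpr hTv) hyμ
  have hz0 : z = 0 :=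
    disjoint_def.mp (T.eigenspaces_iSupIndep.disjoint_biSup (by simp)) z hzμ hz
  simpa [hz0] using hy

theorem List.eq_nil_of_forall_neg_of_sum_eq_zero {js : List ℤ} (hneg : ∀ j ∈ js, j < 0)
    (hsum : js.sum = 0) : js = [] := by
  have hle := js.sum_le_card_nsmul (-1) fun j hj => by have := hneg j hj; omega
  rw [hsum, smul_neg, nsmul_one, Left.nonneg_neg_iff, Int.natCast_nonpos_iff] at hle
  exact List.length_eq_zero_iff.mp hle

section LieWord

variable {ι R V M : Type*} [CommRing R] [LieRing V] [LieAlgebra R V] [AddCommGroup M] [Module R M]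
  [LieRingModule V M]

def lieWord (x : ι → V) (v : M) : List ι → M
  | [] => v
  | j :: t => ⁅x j, lieWord x v t⁆

@[simp] theorem lieWord_nil (x : ι → V) (v : M) : lieWord x v [] = v := rfl

@[simp] theorem lieWord_cons (x : ι → V) (v : M) (j : ι) (t : List ι) :
    lieWord x v (j :: t) = ⁅x j, lieWord x v t⁆ := rfl

theorem id_add_lie_eq_lie_of_differential {f : V →ₗ[R] V} {δ : M →ₗ[R] M}
    (hdm : ∀ (x : V) (m : M), δ ⁅x, m⁆ = ⁅f x - x, m⁆ + ⁅x, δ m⁆ + ⁅f x - x, δ m⁆)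
    (x : V) (m : M) :
    (LinearMap.id + δ : M →ₗ[R] M) ⁅x, m⁆ = ⁅f x, (LinearMap.id + δ : M →ₗ[R] M) m⁆ := by
  simp only [LinearMap.add_apply, LinearMap.id_apply, hdm, lie_add, sub_lie]
  abel

variable [LieModule R V M]

variable (R) in
theorem lie_mem_span_of_forall_mem {s : Set M} (x : V) (hs : ∀ w ∈ s, ⁅x, w⁆ ∈ span R s)
    {m : M} (hm : m ∈ span R s) : ⁅x, m⁆ ∈ span R s :=
  span_le (p := (span R s).comap (LieModule.toEnd R V M x)) |>.mpr hs hm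

theorem Module.Basis.lie_mem {ι' : Type*} (b : Module.Basis ι' R V) (N : Submodule R M)
    (hb : ∀ i, ∀ m ∈ N, ⁅b i, m⁆ ∈ N) (x : V) {m : M} (hm : m ∈ N) : ⁅x, m⁆ ∈ N := by
  have hx : x ∈ span R (range b) := b.span_eq ▸ mem_top
  induction hx using span_induction with
  | mem y hy => obtain ⟨i, rfl⟩ := hy; exact hb i m hm
  | zero => simp
  | add y z _ _ hy hz => simpa only [add_lie] using N.add_mem hy hz
  | smul t y _ hy => simpa only [smul_lie] using N.smul_mem t hy

theorem lieWord_smul (x : ι → V) (t : R) (v : M) (js : List ι) :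
    lieWord x (t • v) js = t • lieWord x v js := by
  induction js with
  | nil => rfl
  | cons j js ih => rw [lieWord_cons, ih, lie_smul, lieWord_cons]

theorem lie_lieWord_of_lie_eq_zero {z : V} {x : ι → V} (hz : ∀ j, ⁅z, x j⁆ = 0) {c : R}
    {v : M} (hv : ⁅z, v⁆ = c • v) (js : List ι) : ⁅z, lieWord x v js⁆ = c • lieWord x v js := by
  induction js with
  | nil => exact hv
  | cons j js ih => rw [lieWord_cons, leibniz_lie, hz, zero_lie, zero_add, ih, lie_smul]

end LieWord

section Virasoro

variable {V M : Type*} [LieRing V] [AddCommGroup M] [Module ℂ M] [LieRingModule V M] {L : ℤ → V}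

def negWord (L : ℤ → V) (v₀ : M) (js : {js : List ℤ // ∀ j ∈ js, j < 0}) : M :=
  lieWord L v₀ js.1

theorem lieWord_mem_span_negWord (v₀ : M) {js : List ℤ} (hjs : ∀ j ∈ js, j < 0) :
    lieWord L v₀ js ∈ span ℂ (range (negWord L v₀)) :=
  subset_span ⟨⟨js, hjs⟩, rfl⟩

variable [LieAlgebra ℂ V] [LieModule ℂ V M] {C : V}

theorem PhiTau.one_apply {a : ℂ} {f : V →ₗ[ℂ] V} (hf : PhiTau L C 1 a f) (j : ℤ) :
    f (L j) = a ^ j • L j := by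
  simpa using hf.1 j

theorem map_lieWord_of_map_lie_eq_zpow_smul {a : ℂ} (ha : a ≠ 0) {D : M →ₗ[ℂ] M}
    (hD : ∀ (j : ℤ) (m : M), D ⁅L j, m⁆ = a ^ j • ⁅L j, D m⁆) (v : M) (js : List ℤ) :
    D (lieWord L v js) = a ^ js.sum • lieWord L (D v) js := by
  induction js with
  | nil => simp
  | cons j js ih =>
    rw [lieWord_cons, hD, ih, lie_smul, smul_smul, List.sum_cons, zpow_add₀ ha, lieWord_cons]

theorem VirRel.lie_L_zero (hrel : VirRel L C) (j : ℤ) : ⁅L 0, L j⁆ = (j : ℂ) • L j := by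
  simp [hrel.1 0 j]

theorem VirRel.lie_L_zero_lieWord (hrel : VirRel L C) {μ : ℂ} {v : M} (hv : ⁅L 0, v⁆ = μ • v)
    (js : List ℤ) : ⁅L 0, lieWord L v js⁆ = (μ + js.sum) • lieWord L v js := by
  induction js with
  | nil => simpa using hv
  | cons j js ih =>
    rw [lieWord_cons, leibniz_lie, hrel.lie_L_zero, smul_lie, ih, lie_smul, List.sum_cons]
    push_cast
    module

theorem lie_L_mem_span_negWord_of_neg {v₀ : M} {k : ℤ} (hk : k < 0) {m : M}
    (hm : m ∈ span ℂ (range (negWord L v₀))) : ⁅L k, m⁆ ∈ span ℂ (range (negWord L v₀)) := by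
  refine lie_mem_span_of_forall_mem ℂ (L k) ?_ hm
  rintro _ ⟨⟨js, hjs⟩, rfl⟩
  refine lieWord_mem_span_negWord v₀ (js := k :: js) ?_
  simpa [hk] using hjs

theorem VirRel.lie_L_lieWord_mem_span_negWord (hrel : VirRel L C) {h c : ℂ} {v₀ : M}
    (hw0 : ⁅L 0, v₀⁆ = h • v₀) (hwC : ⁅C, v₀⁆ = c • v₀)
    (hwpos : ∀ i : ℤ, 0 < i → ⁅L i, v₀⁆ = 0) {js : List ℤ} (hjs : ∀ j ∈ js, j < 0) (i : ℤ) :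
    ⁅L i, lieWord L v₀ js⁆ ∈ span ℂ (range (negWord L v₀)) := by
  induction js generalizing i with
  | nil =>
    rcases lt_trichotomy i 0 with hi | rfl | hi
    · exact lieWord_mem_span_negWord v₀ (js := [i]) (by simpa using hi)
    · simpa [hw0] using smul_mem _ h (lieWord_mem_span_negWord v₀ (js := []) (by simp))
    · simp [hwpos i hi]
  | cons k t ih =>
    have hk : k < 0 := hjs k List.mem_cons_self
    have ht : ∀ j ∈ t, j < 0 := fun j hj => hjs j (List.mem_cons_of_mem k hj)
    rw [lieWord_cons, leibniz_lie, hrel.1 i k, add_lie, smul_lie, smul_lie,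
      lie_lieWord_of_lie_eq_zero hrel.2 hwC]
    exact add_mem (add_mem (smul_mem _ _ (ih ht (i + k)))
      (smul_mem _ _ (smul_mem _ c (lieWord_mem_span_negWord v₀ ht))))
      (lie_L_mem_span_negWord_of_neg hk (ih ht i))

theorem VirRel.mem_span_negWord (hrel : VirRel L C) (b : Module.Basis (Option ℤ) ℂ V)
    (hbL : ∀ i : ℤ, b (some i) = L i) (hbC : b none = C) {h c : ℂ} {v₀ : M}
    (hw0 : ⁅L 0, v₀⁆ = h • v₀) (hwC : ⁅C, v₀⁆ = c • v₀)
    (hwpos : ∀ i : ℤ, 0 < i → ⁅L i, v₀⁆ = 0)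
    (hgen : ∀ N : LieSubmodule ℂ V M, v₀ ∈ N → ∀ m : M, m ∈ N) (m : M) :
    m ∈ span ℂ (range (negWord L v₀)) := by
  have hb : ∀ i, ∀ m ∈ span ℂ (range (negWord L v₀)),
      ⁅b i, m⁆ ∈ span ℂ (range (negWord L v₀)) := by
    rintro (_ | j) m hm <;> refine lie_mem_span_of_forall_mem ℂ _ ?_ hm <;>
      rintro _ ⟨⟨js, hjs⟩, rfl⟩
    · rw [hbC, negWord, lie_lieWord_of_lie_eq_zero hrel.2 hwC]
      exact smul_mem _ c (lieWord_mem_span_negWord v₀ hjs)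
    · rw [hbL]
      exact hrel.lie_L_lieWord_mem_span_negWord hw0 hwC hwpos hjs j
  exact hgen ⟨span ℂ (range (negWord L v₀)), fun {x _} hm => b.lie_mem _ hb x hm⟩
    (lieWord_mem_span_negWord v₀ (js := []) (by simp)) m

theorem VirRel.mem_span_negWord_sum_eq (hrel : VirRel L C) {h : ℂ} {v₀ : M}
    (hw0 : ⁅L 0, v₀⁆ = h • v₀) {n : ℤ} {v : M} (hv : v ∈ span ℂ (range (negWord L v₀)))
    (hvn : ⁅L 0, v⁆ = (h + n) • v) : v ∈ span ℂ (negWord L v₀ '' {js | js.1.sum = n}) := by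
  have hT (js) :
      LieModule.toEnd ℂ V M (L 0) (negWord L v₀ js) = (h + js.1.sum) • negWord L v₀ js :=
    hrel.lie_L_zero_lieWord hw0 js.1
  simpa only [add_right_inj, Int.cast_inj] using
    Module.End.mem_span_image_of_apply_eq_smul _ _ _ hT hv hvn

end Virasoro

theorem stmt_12_general {V : Type*} [LieRing V] [LieAlgebra ℂ V]
    (L : ℤ → V) (C : V)
    (b : Module.Basis (Option ℤ) ℂ V) (hbL : ∀ i : ℤ, b (some i) = L i) (hbC : b none = C)
    (hrel : VirRel L C)
    {M : Type*} [AddCommGroup M] [Module ℂ M] [LieRingModule V M] [LieModule ℂ V M]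
    (h c : ℂ) (v₀ : M)
    (hw0 : ⁅L 0, v₀⁆ = h • v₀) (hwC : ⁅C, v₀⁆ = c • v₀)
    (hwpos : ∀ i : ℤ, 0 < i → ⁅L i, v₀⁆ = 0)
    (hgen : ∀ N : LieSubmodule ℂ V M, v₀ ∈ N → ∀ m : M, m ∈ N)
    (a : ℂ) (ha : a ≠ 0)
    (f : V →ₗ[ℂ] V) (hf : PhiTau L C 1 a f)
    (δ : M →ₗ[ℂ] M)
    (hdm : ∀ (x : V) (m : M),
      δ ⁅x, m⁆ = ⁅f x - x, m⁆ + ⁅x, δ m⁆ + ⁅f x - x, δ m⁆) :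
    ∃ ξ : ℂ, ∀ (i : ℕ) (v : M),
      (⁅L 0, v⁆ = (h - (i : ℂ)) • v ∧ ⁅C, v⁆ = c • v) →
      δ v = (ξ * a ^ (-(i : ℤ)) - 1) • v := by
  set D : Module.End ℂ M := LinearMap.id + δ
  have hDL (j : ℤ) (m : M) : D ⁅L j, m⁆ = a ^ j • ⁅L j, D m⁆ := by
    rw [id_add_lie_eq_lie_of_differential hdm, hf.one_apply, smul_lie]
  have hspan := hrel.mem_span_negWord b hbL hbC hw0 hwC hwpos hgen
  obtain ⟨ξ, hξ⟩ : ∃ ξ : ℂ, ξ • v₀ = D v₀ := by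
    have hDv₀ : ⁅L 0, D v₀⁆ = (h + (0 : ℤ)) • D v₀ := by simpa [hw0] using (hDL 0 v₀).symm
    refine mem_span_singleton.mp (span_mono ?_ (hrel.mem_span_negWord_sum_eq hw0 (hspan _) hDv₀))
    rintro _ ⟨⟨js, hjs⟩, hsum, rfl⟩
    obtain rfl := js.eq_nil_of_forall_neg_of_sum_eq_zero hjs hsum
    rfl
  refine ⟨ξ, fun i v ⟨hv, _⟩ => ?_⟩
  have hDv : v ∈ D.eigenspace (ξ * a ^ (-(i : ℤ))) := by
    refine span_le.mpr ?_ (hrel.mem_span_negWord_sum_eq hw0 (hspan v) (n := -i) ?_)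
    · rintro _ ⟨⟨js, hjs⟩, hsum : js.sum = -i, rfl⟩
      rw [SetLike.mem_coe, Module.End.mem_eigenspace_iff, negWord,
        map_lieWord_of_map_lie_eq_zpow_smul ha hDL, ← hξ, lieWord_smul, smul_smul, hsum, mul_comm]
    · simpa [sub_eq_add_neg] using hv
  rw [sub_smul, one_smul, ← Module.End.mem_eigenspace_iff.mp hDv]
  simp [D]

/-- for a 1-differential module structure `δ ≠ -id` on the Verma
module `M(h,c)` over `(Vir, d_{1,a})`, there is `ξ ∈ ℂ` with
`δ(v) = (ξ a^{-i} - 1)v` for all `v` in the weight space `M_{-i}`, `i ∈ ℤ₊`. -/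
theorem stmt_12 {V : Type*} [LieRing V] [LieAlgebra ℂ V]
    (L : ℤ → V) (C : V)
    (b : Module.Basis (Option ℤ) ℂ V) (hbL : ∀ i : ℤ, b (some i) = L i) (hbC : b none = C)
    (hrel : VirRel L C)
    {M : Type*} [AddCommGroup M] [Module ℂ M] [LieRingModule V M] [LieModule ℂ V M]
    (h c : ℂ) (v₀ : M) (hv₀ : v₀ ≠ 0)
    (hw0 : ⁅L 0, v₀⁆ = h • v₀) (hwC : ⁅C, v₀⁆ = c • v₀)
    (hwpos : ∀ i : ℤ, 0 < i → ⁅L i, v₀⁆ = 0)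
    (hgen : ∀ N : LieSubmodule ℂ V M, v₀ ∈ N → ∀ m : M, m ∈ N)
    (hdec : ∀ m : M, m ∈ Submodule.span ℂ
      {w : M | ∃ k : ℕ, ⁅L 0, w⁆ = (h - (k : ℂ)) • w ∧ ⁅C, w⁆ = c • w})
    (a : ℂ) (ha : a ≠ 0)
    (f : V →ₗ[ℂ] V) (hf : PhiTau L C 1 a f)
    (δ : M →ₗ[ℂ] M) (hδ : δ ≠ -(LinearMap.id : M →ₗ[ℂ] M))
    (hdm : ∀ (x : V) (m : M),
      δ ⁅x, m⁆ = ⁅f x - x, m⁆ + ⁅x, δ m⁆ + ⁅f x - x, δ m⁆) :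
    ∃ ξ : ℂ, ∀ (i : ℕ) (v : M),
      (⁅L 0, v⁆ = (h - (i : ℂ)) • v ∧ ⁅C, v⁆ = c • v) →
      δ v = (ξ * a ^ (-(i : ℤ)) - 1) • v :=
  stmt_12_general L C b hbL hbC hrel h c v₀ hw0 hwC hwpos hgen a ha f hf δ hdm
end

section
/- Let V(α,β) be the Virasoro module of intermediate series with basis {v_i : i ∈ ℤ}, action L_i v_j = (α + j + βi)v_{i+j}, C v_j = 0. Fix a nonzero integer n and a ∈ ℂ* with (n−1)α ∈ ℤ, and ξ ∈ ℂ. Then the linear map δ defined by δ(v_i) = ξa^i v_{(n−1)α + ni} − v_i makes (V(α,β), δ) a 1-differential module over (Vir, d_{n,a}). -/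
section OneDifferential

variable {R L M : Type*} [CommRing R] [LieRing L] [LieAlgebra R L]
  [AddCommGroup M] [Module R M] [LieRingModule L M] [LieModule R L M]

def IsOneDifferential (d : L →ₗ[R] L) (δ : M →ₗ[R] M) : Prop :=
  ∀ (x : L) (m : M), δ ⁅x, m⁆ = ⁅d x, m⁆ + ⁅x, δ m⁆ + ⁅d x, δ m⁆

theorem IsOneDifferential.of_basis {ι κ : Type*} (bL : Module.Basis ι R L)
    (bM : Module.Basis κ R M) (d : L →ₗ[R] L) (δ : M →ₗ[R] M)
    (h : ∀ i j, δ ⁅bL i, bM j⁆ = ⁅d (bL i), bM j⁆ + ⁅bL i, δ (bM j)⁆ + ⁅d (bL i), δ (bM j)⁆) :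
    IsOneDifferential d δ := by
  let act : L →ₗ[R] M →ₗ[R] M :=
    LinearMap.mk₂ R (fun x m => ⁅x, m⁆) add_lie smul_lie lie_add lie_smul
  have hbilin : act.compr₂ δ = act ∘ₗ d + act.compl₂ δ + act.compl₂ δ ∘ₗ d :=
    LinearMap.ext_basis bL bM h
  intro x m
  exact LinearMap.congr_fun₂ hbilin x m

end OneDifferential

section IntermediateSeries

variable {K V M : Type*} [Field K] [LieRing V] [LieAlgebra K V]
  [AddCommGroup M] [Module K M] [LieRingModule V M] [LieModule K V M]

theorem intermediateSeries_oneDifferential_L_v (L : ℤ → V) (C : V) (α β : K) (v : ℤ → M)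
    (hact : ∀ i j : ℤ, ⁅L i, v j⁆ = (α + (j : K) + β * (i : K)) • v (i + j))
    (hactC : ∀ m : M, ⁅C, m⁆ = 0)
    (n : ℤ) (hn : (n : K) ≠ 0) (a : K) (ha : a ≠ 0) (f : V →ₗ[K] V)
    (hf : ∀ i : ℤ, f (L i) = (a ^ i / (n : K)) •
      (L (n * i) - (if i = 0 then ((n : K) ^ 2 - 1) / 24 else 0) • C))
    (k : ℤ) (hk : ((n : K) - 1) * α = (k : K)) (ξ : K) (δ : M →ₗ[K] M)
    (hδ : ∀ i : ℤ, δ (v i) = (ξ * a ^ i) • v (k + n * i) - v i) (i j : ℤ) :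
    δ ⁅L i, v j⁆ = ⁅f (L i) - L i, v j⁆ + ⁅L i, δ (v j)⁆ + ⁅f (L i) - L i, δ (v j)⁆ := by
  simp only [hf, hδ, hact, map_smul, sub_lie, smul_lie, lie_sub, lie_smul, hactC,
    smul_zero, sub_zero]
  have hindex : n * i + (k + n * j) = k + n * (i + j) := by ring
  rw [hindex, zpow_add₀ ha]
  match_scalars <;> push_cast [← hk] <;> field_simp <;> ring

end IntermediateSeries

theorem stmt_13_general {V : Type*} [LieRing V] [LieAlgebra ℂ V]
    (L : ℤ → V) (C : V)
    (b : Module.Basis (Option ℤ) ℂ V) (hbL : ∀ i : ℤ, b (some i) = L i) (hbC : b none = C)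
    {M : Type*} [AddCommGroup M] [Module ℂ M] [LieRingModule V M] [LieModule ℂ V M]
    (α β : ℂ) (v : ℤ → M)
    (bv : Module.Basis ℤ ℂ M) (hbv : ∀ i : ℤ, bv i = v i)
    (hact : ∀ i j : ℤ, ⁅L i, v j⁆ = (α + (j : ℂ) + β * (i : ℂ)) • v (i + j))
    (hactC : ∀ m : M, ⁅C, m⁆ = 0)
    (n : ℤ) (hn : n ≠ 0) (a : ℂ) (ha : a ≠ 0)
    (f : V →ₗ[ℂ] V) (hf : PhiTau L C n a f)
    (k : ℤ) (hk : ((n : ℂ) - 1) * α = (k : ℂ)) (ξ : ℂ)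
    (δ : M →ₗ[ℂ] M)
    (hδ : ∀ i : ℤ, δ (v i) = (ξ * a ^ i) • v (k + n * i) - v i) :
    ∀ (x : V) (m : M),
      δ ⁅x, m⁆ = ⁅f x - x, m⁆ + ⁅x, δ m⁆ + ⁅f x - x, δ m⁆ := by
  have hdiff : IsOneDifferential (f - LinearMap.id) δ := by
    refine IsOneDifferential.of_basis b bv _ δ ?_
    rintro (_ | i) j
    · simp [hbC, hf.2, sub_lie, smul_lie, hactC]
    · simpa [hbL, hbv] using intermediateSeries_oneDifferential_L_v L C α β v hact hactC n
        (Int.cast_ne_zero.mpr hn) a ha f hf.1 k hk ξ δ hδ i j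
  exact hdiff

/-- if `(n-1)α = k ∈ ℤ`, then `δ(v_i) = ξ a^i v_{(n-1)α+ni} - v_i`
defines a 1-differential module structure on the module `V(α,β)` of intermediate
series over `(Vir, d_{n,a})`. -/
theorem stmt_13 {V : Type*} [LieRing V] [LieAlgebra ℂ V]
    (L : ℤ → V) (C : V)
    (b : Module.Basis (Option ℤ) ℂ V) (hbL : ∀ i : ℤ, b (some i) = L i) (hbC : b none = C)
    (hrel : VirRel L C)
    {M : Type*} [AddCommGroup M] [Module ℂ M] [LieRingModule V M] [LieModule ℂ V M]
    (α β : ℂ) (v : ℤ → M)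
    (bv : Module.Basis ℤ ℂ M) (hbv : ∀ i : ℤ, bv i = v i)
    (hact : ∀ i j : ℤ, ⁅L i, v j⁆ = (α + (j : ℂ) + β * (i : ℂ)) • v (i + j))
    (hactC : ∀ m : M, ⁅C, m⁆ = 0)
    (n : ℤ) (hn : n ≠ 0) (a : ℂ) (ha : a ≠ 0)
    (f : V →ₗ[ℂ] V) (hf : PhiTau L C n a f)
    (k : ℤ) (hk : ((n : ℂ) - 1) * α = (k : ℂ)) (ξ : ℂ)
    (δ : M →ₗ[ℂ] M)
    (hδ : ∀ i : ℤ, δ (v i) = (ξ * a ^ i) • v (k + n * i) - v i) :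
    ∀ (x : V) (m : M),
      δ ⁅x, m⁆ = ⁅f x - x, m⁆ + ⁅x, δ m⁆ + ⁅f x - x, δ m⁆ :=
  stmt_13_general L C b hbL hbC α β v bv hbv hact hactC n hn a ha f hf k hk ξ δ hδ
end

section
/- Let V(α,β) be the module of intermediate series over the Virasoro algebra and suppose (V(α,β),δ) is a 1-differential module over (Vir, d_{n,a}) with δ ≠ −id. Then (n−1)α ∈ ℤ and there exists ξ ∈ ℂ such that δ(v_i) = ξa^i v_{(n−1)α+ni} − v_i for all i ∈ ℤ. -/
/-!
`D = δ + id` satisfies `D ⁅x, m⁆ = ⁅f x, D m⁆`: it intertwines the action with the action twisted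
by `f = d_{n,a} + id`. Since `f L₀ ≡ L₀ / n` modulo the central element, which acts trivially, `D`
multiplies `L₀`-eigenvalues by `n`; the eigenvalues `α + k` of `L₀` on the basis are simple, so
`D v_j ∈ ℂ v_k` with `α + k = n (α + j)`. As `δ ≠ -id`, some `D v_j ≠ 0`, whence `(n - 1) α = K ∈ ℤ`
and `D v_j = e_j v_{K + n j}`. Applying `D` to `⁅L_m, v_j⁆` gives
`(α + j + β m) (e_{j+m} - a^m e_j) = 0`, and the cases `m = 1, 2` force `e_{j+1} = a e_j`.
-/

theorem lie_add_eq_lie_add_of_differential {V M : Type*} [LieRing V] [AddCommGroup M]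
    [LieRingModule V M] {f : V → V} {δ : M → M}
    (hdm : ∀ (x : V) (m : M), δ ⁅x, m⁆ = ⁅f x - x, m⁆ + ⁅x, δ m⁆ + ⁅f x - x, δ m⁆)
    (x : V) (m : M) : δ ⁅x, m⁆ + ⁅x, m⁆ = ⁅f x, δ m + m⁆ := by
  rw [hdm, sub_lie, sub_lie, lie_add]
  abel

namespace Module.Basis

variable {ι R M : Type*} [CommRing R] [AddCommGroup M] [Module R M] (b : Basis ι R M)
  {T : M →ₗ[R] M} {μ : ι → R}

theorem repr_apply_of_apply_eq_smul (hT : ∀ i, T (b i) = μ i • b i) (w : M) (k : ι) :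
    b.repr (T w) k = μ k * b.repr w k := by
  classical
  have : (Finsupp.lapply k).comp (b.repr.toLinearMap.comp T) =
      μ k • (Finsupp.lapply k).comp b.repr.toLinearMap := by
    refine b.ext fun i => ?_
    by_cases h : i = k
    · subst h; simp [hT]
    · simp [hT, h]
  simpa using LinearMap.congr_fun this w

theorem repr_eq_zero_of_apply_eq_smul [NoZeroDivisors R] (hT : ∀ i, T (b i) = μ i • b i)
    {w : M} {c : R} (hw : T w = c • w) {k : ι} (hk : μ k ≠ c) : b.repr w k = 0 := by
  have h := b.repr_apply_of_apply_eq_smul hT w k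
  rw [hw, map_smul, Finsupp.smul_apply, smul_eq_mul] at h
  have h0 : (μ k - c) * b.repr w k = 0 := by rw [sub_mul, ← h, sub_self]
  exact (mul_eq_zero.mp h0).resolve_left (sub_ne_zero.mpr hk)

end Module.Basis

theorem eq_mul_zpow_of_forall_succ {G : Type*} [CommGroupWithZero G] {e : ℤ → G} {a : G}
    (ha : a ≠ 0) (h : ∀ j, e (j + 1) = a * e j) (i : ℤ) : e i = e 0 * a ^ i := by
  induction i using Int.induction_on with
  | zero => simp
  | succ i ih => rw [h, ih, zpow_add_one₀ ha, mul_left_comm, mul_comm a]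
  | pred i ih =>
    have hi := h (-(i : ℤ) - 1)
    rw [sub_add_cancel, ih] at hi
    rw [zpow_sub_one₀ ha, ← mul_assoc, hi, mul_comm a, mul_inv_cancel_right₀ ha]

theorem succ_eq_mul_of_recurrence {K : Type*} [Field K] {e : ℤ → K} {a α β : K} (ha : a ≠ 0)
    (h : ∀ m j : ℤ, m ≠ 0 → (α + j + β * m) * (e (j + m) - a ^ m * e j) = 0) (j : ℤ) :
    e (j + 1) = a * e j := by
  have step : ∀ m j : ℤ, m ≠ 0 → α + j + β * m ≠ 0 → e (j + m) = a ^ m * e j := fun m j hm hc =>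
    sub_eq_zero.mp ((mul_eq_zero.mp (h m j hm)).resolve_left hc)
  by_cases h1 : α + j + β = 0
  -- the `m = 1` relation at `j` is then empty: go through `m = 2`
  · by_cases hβ : β = 0
    · have c1 : α + ((j - 1 : ℤ) : K) + β * ((1 : ℤ) : K) = -1 := by
        push_cast; linear_combination h1
      have c2 : α + ((j - 1 : ℤ) : K) + β * ((2 : ℤ) : K) = -1 := by
        push_cast; linear_combination h1 + hβ
      have e1 := step 1 (j - 1) one_ne_zero (by rw [c1]; exact neg_ne_zero.mpr one_ne_zero)
      have e2 := step 2 (j - 1) two_ne_zero (by rw [c2]; exact neg_ne_zero.mpr one_ne_zero)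
      rw [sub_add_cancel, zpow_one] at e1
      rw [show j - 1 + 2 = j + 1 by ring, zpow_two] at e2
      rw [e2, e1, mul_assoc]
    · have c1 : α + ((j + 1 : ℤ) : K) + β * ((1 : ℤ) : K) = 1 := by
        push_cast; linear_combination h1
      have c2 : α + (j : K) + β * ((2 : ℤ) : K) = β := by
        push_cast; linear_combination h1
      have e1 := step 1 (j + 1) one_ne_zero (by rw [c1]; exact one_ne_zero)
      have e2 := step 2 j two_ne_zero (by rw [c2]; exact hβ)
      rw [add_assoc, one_add_one_eq_two, zpow_one] at e1
      rw [zpow_two] at e2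
      exact mul_left_cancel₀ ha (by linear_combination e2 - e1)
  · simpa using step 1 j one_ne_zero (by simpa using h1)

section IntermediateSeries

variable {V : Type*} [LieRing V] [LieAlgebra ℂ V] {L : ℤ → V} {C : V}
  {M : Type*} [AddCommGroup M] [Module ℂ M] [LieRingModule V M] [LieModule ℂ V M]
  {α β : ℂ} {v : ℤ → M} {bv : Module.Basis ℤ ℂ M} {n : ℤ} {a : ℂ} {f : V →ₗ[ℂ] V}
  {D : M →ₗ[ℂ] M}

theorem lie_L_zero_map_v_eq_smul
    (hact : ∀ i j : ℤ, ⁅L i, v j⁆ = (α + (j : ℂ) + β * (i : ℂ)) • v (i + j))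
    (hactC : ∀ m : M, ⁅C, m⁆ = 0) (hn : n ≠ 0) (hf : PhiTau L C n a f)
    (hD : ∀ (x : V) (m : M), D ⁅x, m⁆ = ⁅f x, D m⁆) (j : ℤ) :
    ⁅L 0, D (v j)⁆ = ((n : ℂ) * (α + j)) • D (v j) := by
  have h := hD (L 0) (v j)
  rw [hf.1 0] at h
  simp only [hact 0 j, zero_add, Int.cast_zero, mul_zero, add_zero, map_smul, zpow_zero,
    if_true, smul_lie, sub_lie, hactC, smul_zero, sub_zero] at h
  rw [mul_smul, h, smul_smul, mul_one_div_cancel (Int.cast_ne_zero.mpr hn), one_smul]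

theorem repr_map_v_eq_zero (hbv : ∀ i : ℤ, bv i = v i)
    (hact : ∀ i j : ℤ, ⁅L i, v j⁆ = (α + (j : ℂ) + β * (i : ℂ)) • v (i + j))
    (hactC : ∀ m : M, ⁅C, m⁆ = 0) (hn : n ≠ 0) (hf : PhiTau L C n a f)
    (hD : ∀ (x : V) (m : M), D ⁅x, m⁆ = ⁅f x, D m⁆) {j k : ℤ} (hk : α + k ≠ n * (α + j)) :
    bv.repr (D (v j)) k = 0 :=
  bv.repr_eq_zero_of_apply_eq_smul (T := LieModule.toEnd ℂ V M (L 0)) (μ := fun k => α + k)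
    (fun i => by simpa [hbv] using hact 0 i) (lie_L_zero_map_v_eq_smul hact hactC hn hf hD j) hk

theorem exists_sub_one_mul_eq_intCast_of_ne_zero (hbv : ∀ i : ℤ, bv i = v i)
    (hact : ∀ i j : ℤ, ⁅L i, v j⁆ = (α + (j : ℂ) + β * (i : ℂ)) • v (i + j))
    (hactC : ∀ m : M, ⁅C, m⁆ = 0) (hn : n ≠ 0) (hf : PhiTau L C n a f)
    (hD : ∀ (x : V) (m : M), D ⁅x, m⁆ = ⁅f x, D m⁆) (hD0 : D ≠ 0) :
    ∃ K : ℤ, ((n : ℂ) - 1) * α = K := by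
  obtain ⟨j, hj⟩ : ∃ j, D (v j) ≠ 0 := by
    by_contra! h
    exact hD0 (bv.ext fun i => by simpa [hbv] using h i)
  obtain ⟨k, hk⟩ : ∃ k, bv.repr (D (v j)) k ≠ 0 := by
    by_contra! h
    exact hj (bv.repr.injective (Finsupp.ext fun k => by simpa using h k))
  have hk' : α + k = n * (α + j) := by
    by_contra h
    exact hk (repr_map_v_eq_zero hbv hact hactC hn hf hD h)
  exact ⟨k - n * j, by push_cast; linear_combination -hk'⟩

theorem map_v_eq_repr_smul (hbv : ∀ i : ℤ, bv i = v i)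
    (hact : ∀ i j : ℤ, ⁅L i, v j⁆ = (α + (j : ℂ) + β * (i : ℂ)) • v (i + j))
    (hactC : ∀ m : M, ⁅C, m⁆ = 0) (hn : n ≠ 0) (hf : PhiTau L C n a f)
    (hD : ∀ (x : V) (m : M), D ⁅x, m⁆ = ⁅f x, D m⁆) {K : ℤ} (hK : ((n : ℂ) - 1) * α = K)
    (j : ℤ) : D (v j) = bv.repr (D (v j)) (K + n * j) • v (K + n * j) := by
  classical
  refine bv.repr.injective (Finsupp.ext fun k => ?_)
  rw [← hbv (K + n * j), map_smul, bv.repr_self, Finsupp.smul_apply, Finsupp.single_apply]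
  split_ifs with h
  · rw [h, smul_eq_mul, mul_one]
  · rw [smul_zero]
    refine repr_map_v_eq_zero hbv hact hactC hn hf hD fun hk => h ?_
    exact_mod_cast (by push_cast; linear_combination -hK - hk : ((K + n * j : ℤ) : ℂ) = k)

theorem recurrence_of_map_v_eq_smul {e : ℤ → ℂ}
    (hact : ∀ i j : ℤ, ⁅L i, v j⁆ = (α + (j : ℂ) + β * (i : ℂ)) • v (i + j))
    (hv : ∀ i, v i ≠ 0) (hn : n ≠ 0) (hf : PhiTau L C n a f)
    (hD : ∀ (x : V) (m : M), D ⁅x, m⁆ = ⁅f x, D m⁆) {K : ℤ} (hK : ((n : ℂ) - 1) * α = K)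
    (hDv : ∀ j, D (v j) = e j • v (K + n * j)) (m j : ℤ) (hm : m ≠ 0) :
    (α + j + β * m) * (e (j + m) - a ^ m * e j) = 0 := by
  have h := hD (L m) (v j)
  rw [hact, map_smul, hDv, hf.1 m, if_neg hm, zero_smul, sub_zero, hDv, smul_lie, lie_smul,
    hact, smul_smul, smul_smul, smul_smul, show n * m + (K + n * j) = K + n * (m + j) by ring] at h
  have hc := smul_left_injective ℂ (hv _) h
  have hnc : (n : ℂ) ≠ 0 := Int.cast_ne_zero.mpr hn
  rw [add_comm j m]
  field_simp at hc
  push_cast at hc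
  have hn' : (n : ℂ) * ((α + j + β * m) * (e (m + j) - a ^ m * e j)) = 0 := by
    linear_combination hc - a ^ m * e j * hK
  exact (mul_eq_zero.mp hn').resolve_left hnc

end IntermediateSeries

theorem stmt_14_general {V : Type*} [LieRing V] [LieAlgebra ℂ V]
    (L : ℤ → V) (C : V)
    {M : Type*} [AddCommGroup M] [Module ℂ M] [LieRingModule V M] [LieModule ℂ V M]
    (α β : ℂ) (v : ℤ → M)
    (bv : Module.Basis ℤ ℂ M) (hbv : ∀ i : ℤ, bv i = v i)
    (hact : ∀ i j : ℤ, ⁅L i, v j⁆ = (α + (j : ℂ) + β * (i : ℂ)) • v (i + j))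
    (hactC : ∀ m : M, ⁅C, m⁆ = 0)
    (n : ℤ) (hn : n ≠ 0) (a : ℂ) (ha : a ≠ 0)
    (f : V →ₗ[ℂ] V) (hf : PhiTau L C n a f)
    (δ : M →ₗ[ℂ] M) (hδ : δ ≠ -(LinearMap.id : M →ₗ[ℂ] M))
    (hdm : ∀ (x : V) (m : M),
      δ ⁅x, m⁆ = ⁅f x - x, m⁆ + ⁅x, δ m⁆ + ⁅f x - x, δ m⁆) :
    ∃ k : ℤ, ((n : ℂ) - 1) * α = (k : ℂ) ∧
      ∃ ξ : ℂ, ∀ i : ℤ, δ (v i) = (ξ * a ^ i) • v (k + n * i) - v i := by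
  set D := δ + LinearMap.id
  have hD (x : V) (m : M) : D ⁅x, m⁆ = ⁅f x, D m⁆ := lie_add_eq_lie_add_of_differential hdm x m
  have hD0 : D ≠ 0 := fun h => hδ (eq_neg_of_add_eq_zero_left h)
  obtain ⟨K, hK⟩ := exists_sub_one_mul_eq_intCast_of_ne_zero hbv hact hactC hn hf hD hD0
  set e : ℤ → ℂ := fun j => bv.repr (D (v j)) (K + n * j)
  have hDv : ∀ j, D (v j) = e j • v (K + n * j) := map_v_eq_repr_smul hbv hact hactC hn hf hD hK
  have hv (i : ℤ) : v i ≠ 0 := hbv i ▸ bv.ne_zero i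
  have he : ∀ i, e i = e 0 * a ^ i := eq_mul_zpow_of_forall_succ ha
    (succ_eq_mul_of_recurrence ha (recurrence_of_map_v_eq_smul hact hv hn hf hD hK hDv))
  refine ⟨K, hK, e 0, fun i => ?_⟩
  rw [eq_sub_iff_add_eq, ← he, ← hDv]
  rfl

/-- any 1-differential module structure `δ ≠ -id` on the module
`V(α,β)` of intermediate series over `(Vir, d_{n,a})` satisfies `(n-1)α ∈ ℤ` and
`δ(v_i) = ξ a^i v_{(n-1)α+ni} - v_i` for some `ξ ∈ ℂ`. -/
theorem stmt_14 {V : Type*} [LieRing V] [LieAlgebra ℂ V]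
    (L : ℤ → V) (C : V)
    (b : Module.Basis (Option ℤ) ℂ V) (hbL : ∀ i : ℤ, b (some i) = L i) (hbC : b none = C)
    (hrel : VirRel L C)
    {M : Type*} [AddCommGroup M] [Module ℂ M] [LieRingModule V M] [LieModule ℂ V M]
    (α β : ℂ) (v : ℤ → M)
    (bv : Module.Basis ℤ ℂ M) (hbv : ∀ i : ℤ, bv i = v i)
    (hact : ∀ i j : ℤ, ⁅L i, v j⁆ = (α + (j : ℂ) + β * (i : ℂ)) • v (i + j))
    (hactC : ∀ m : M, ⁅C, m⁆ = 0)
    (n : ℤ) (hn : n ≠ 0) (a : ℂ) (ha : a ≠ 0)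
    (f : V →ₗ[ℂ] V) (hf : PhiTau L C n a f)
    (δ : M →ₗ[ℂ] M) (hδ : δ ≠ -(LinearMap.id : M →ₗ[ℂ] M))
    (hdm : ∀ (x : V) (m : M),
      δ ⁅x, m⁆ = ⁅f x - x, m⁆ + ⁅x, δ m⁆ + ⁅f x - x, δ m⁆) :
    ∃ k : ℤ, ((n : ℂ) - 1) * α = (k : ℂ) ∧
      ∃ ξ : ℂ, ∀ i : ℤ, δ (v i) = (ξ * a ^ i) • v (k + n * i) - v i :=
  stmt_14_general L C α β v bv hbv hact hactC n hn a ha f hf δ hδ hdm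
end

section
/- Let Ω(μ,b) = ℂ[t] be the Virasoro module with action L_i(t^j) = μ^i(t − ib)(t − i)^j and C acting as zero, where μ ∈ ℂ*, b ∈ ℂ. Suppose (Ω(μ,b),δ) is a 1-differential module over (Vir, d_{n,a}) with δ ≠ −id. Then aμ^{n−1} = 1 and there exists ξ ∈ ℂ such that δ(t^j) = ξ(t/n)^j − t^j for all j ∈ ℤ_{≥0}. Conversely, if aμ^{n−1} = 1, any δ of this form gives a 1-differential module structure. -/
/-!
Put `D = δ + id`. The 1-differential identity says exactly that `D ⁅x, p⁆ = ⁅f x, D p⁆`, where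
`f = d_{n,a} + id`. For `x = L₀` this reads `D (t p) = (t / n) D p`, so `D p = p(t / n) · D 1`.
For `x = L₁`, `p = 1` it then gives `D 1 = aμ^{n-1} · (D 1)(t - n)`. Since `δ ≠ -id`, `D 1 ≠ 0`;
comparing leading coefficients gives `aμ^{n-1} = 1`, and a polynomial invariant under the shift
by `n ≠ 0` is a constant `ξ`. Conversely, `D p = ξ p(t / n)` intertwines `L_i` with `f L_i` by a
direct computation once `a^i μ^{ni} = μ^i`, and both sides vanish on the central element.
-/

open Polynomial

section OneDifferential

variable {R L M : Type*} [CommRing R] [LieRing L] [LieAlgebra R L] [AddCommGroup M] [Module R M]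
  [LieRingModule L M]

theorem oneDifferential_iff (f : L →ₗ[R] L) (δ : M →ₗ[R] M) (x : L) (m : M) :
    δ ⁅x, m⁆ = ⁅f x - x, m⁆ + ⁅x, δ m⁆ + ⁅f x - x, δ m⁆ ↔
      (δ + LinearMap.id : M →ₗ[R] M) ⁅x, m⁆ = ⁅f x, (δ + LinearMap.id : M →ₗ[R] M) m⁆ := by
  simp only [LinearMap.add_apply, LinearMap.id_apply, sub_lie, lie_add]
  constructor <;> intro h
  · rw [h]; abel
  · rw [eq_sub_of_add_eq h]; abel

variable [LieModule R L M]

theorem lie_map_eq_of_basis {ι : Type*} (bL : Module.Basis ι R L) (f : L →ₗ[R] L)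
    (D : M →ₗ[R] M) (h : ∀ i m, D ⁅bL i, m⁆ = ⁅f (bL i), D m⁆) (x : L) (m : M) :
    D ⁅x, m⁆ = ⁅f x, D m⁆ := by
  let T : L →ₗ[R] Module.End R M := LieModule.toEnd R L M
  have hext := bL.ext (f₁ := D ∘ₗ T.flip m) (f₂ := T.flip (D m) ∘ₗ f) fun i => by
    simpa [T] using h i m
  simpa [T] using LinearMap.congr_fun hext x

end OneDifferential

section PolynomialMaps

variable {R : Type*} [CommRing R]

theorem lie_eq_smul_mul_comp {L : Type*} [LieRing L] [LieAlgebra R L] [LieRingModule L R[X]]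
    [LieModule R L R[X]] {y : L} {c : R} {u v : R[X]} (h : ∀ j : ℕ, ⁅y, X ^ j⁆ = c • (u * v ^ j))
    (p : R[X]) : ⁅y, p⁆ = c • (u * p.comp v) := by
  induction p using Polynomial.induction_on' with
  | add p q hp hq => rw [lie_add, hp, hq, add_comp, mul_add, smul_add]
  | monomial k a =>
    rw [← smul_X_eq_monomial, lie_smul, h, smul_comp, X_pow_comp, mul_smul_comm, smul_comm]

theorem linearMap_apply_eq_comp_mul {D : R[X] →ₗ[R] R[X]} {v q : R[X]}
    (h : ∀ j : ℕ, D (X ^ j) = v ^ j * q) (p : R[X]) : D p = p.comp v * q := by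
  induction p using Polynomial.induction_on' with
  | add p q hp hq => rw [map_add, hp, hq, add_comp, add_mul]
  | monomial k a => rw [← smul_X_eq_monomial, map_smul, h, smul_comp, X_pow_comp, smul_mul_assoc]

theorem linearMap_apply_eq_comp_mul_apply_one {D : R[X] →ₗ[R] R[X]} {v : R[X]}
    (h : ∀ p, D (X * p) = v * D p) (p : R[X]) : D p = p.comp v * D 1 := by
  refine linearMap_apply_eq_comp_mul (fun j => ?_) p
  induction j with
  | zero => simp
  | succ j ih => rw [pow_succ', h, ih, pow_succ', mul_assoc]

end PolynomialMaps

section Shift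

variable {K : Type*} [Field K]

theorem X_sub_C_comp_C_inv_mul_X {s : K} (hs : s ≠ 0) (c : K) :
    (X - C c).comp (C s⁻¹ * X) = C s⁻¹ * (X - C (s * c)) := by
  rw [sub_comp, X_comp, C_comp, mul_sub, ← C_mul, inv_mul_cancel_left₀ hs]

theorem eq_one_of_eq_smul_comp_X_sub_C {p : K[X]} (hp : p ≠ 0) {r s : K}
    (h : p = r • p.comp (X - C s)) : r = 1 := by
  have h' := congrArg leadingCoeff h
  rw [smul_eq_C_mul, leadingCoeff_mul, leadingCoeff_C,
    leadingCoeff_comp (by rw [natDegree_X_sub_C]; exact one_ne_zero),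
    (monic_X_sub_C s).leadingCoeff, one_pow, mul_one] at h'
  exact (mul_eq_right₀ (leadingCoeff_ne_zero.2 hp)).1 h'.symm

theorem eq_C_eval_zero_of_comp_X_sub_C_eq [CharZero K] {p : K[X]} {s : K} (hs : s ≠ 0)
    (h : p.comp (X - C s) = p) : p = C (p.eval 0) := by
  have hper : ∀ k : ℕ, p.eval (k * s) = p.eval 0 := by
    intro k
    induction k with
    | zero => simp
    | succ k ih =>
      rw [← ih]
      nth_rw 1 [← h]
      simp [add_mul]
  rw [← sub_eq_zero]
  refine eq_zero_of_infinite_isRoot _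
    (Set.infinite_of_injective_forall_mem (f := fun k : ℕ => k * s)
      (fun k l hkl => by simpa [hs] using hkl) fun k => by simp [hper])

end Shift

section Virasoro

variable {V : Type*} [LieRing V] [LieAlgebra ℂ V] [LieRingModule V ℂ[X]] [LieModule ℂ V ℂ[X]]
  {L : ℤ → V} {z : V} {μ b a : ℂ} {n : ℤ} {f : V →ₗ[ℂ] V}

def IsOmegaAction (L : ℤ → V) (μ b : ℂ) : Prop :=
  ∀ (i : ℤ) (j : ℕ), ⁅L i, (X : ℂ[X]) ^ j⁆ = μ ^ i • ((X - C (i * b)) * (X - C (i : ℂ)) ^ j)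

theorem PhiTau.lie_apply_L (hf : PhiTau L z n a f) (hz : ∀ p : ℂ[X], ⁅z, p⁆ = 0) (i : ℤ)
    (p : ℂ[X]) : ⁅f (L i), p⁆ = (a ^ i / n) • ⁅L (n * i), p⁆ := by
  rw [hf.1 i, smul_lie, sub_lie, smul_lie, hz, smul_zero, sub_zero]

theorem apply_eq_comp_mul_of_intertwines
    (hact : IsOmegaAction L μ b) (hz : ∀ p : ℂ[X], ⁅z, p⁆ = 0) (hf : PhiTau L z n a f)
    {D : ℂ[X] →ₗ[ℂ] ℂ[X]} (hD : ∀ x p, D ⁅x, p⁆ = ⁅f x, D p⁆) (p : ℂ[X]) :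
    D p = p.comp (C (n : ℂ)⁻¹ * X) * D 1 := by
  refine linearMap_apply_eq_comp_mul_apply_one (fun p => ?_) p
  have h := hD (L 0) p
  rw [hf.lie_apply_L hz, lie_eq_smul_mul_comp (hact 0), lie_eq_smul_mul_comp (hact _)] at h
  simpa [smul_eq_C_mul, mul_assoc] using h

theorem apply_one_eq_smul_comp_of_intertwines
    (hact : IsOmegaAction L μ b) (hz : ∀ p : ℂ[X], ⁅z, p⁆ = 0) (hf : PhiTau L z n a f)
    (hμ : μ ≠ 0) (hn : (n : ℂ) ≠ 0)
    {D : ℂ[X] →ₗ[ℂ] ℂ[X]} (hD : ∀ x p, D ⁅x, p⁆ = ⁅f x, D p⁆) :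
    D 1 = (a * μ ^ (n - 1)) • (D 1).comp (X - C (n : ℂ)) := by
  have h := hD (L 1) 1
  rw [← pow_zero X, hact, hf.lie_apply_L hz, lie_eq_smul_mul_comp (hact _), map_smul, pow_zero,
    mul_one, apply_eq_comp_mul_of_intertwines hact hz hf hD, X_sub_C_comp_C_inv_mul_X hn] at h
  have hμn : μ ^ n = μ * μ ^ (n - 1) := by rw [← zpow_one_add₀ hμ]; ring_nf
  simp only [zpow_one, Int.cast_one, mul_one, one_mul, pow_zero, hμn, smul_eq_C_mul] at h ⊢
  -- cancel the common factor `(μ / n) (X - n b)` of both sides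
  refine mul_left_cancel₀ (mul_ne_zero (C_ne_zero.2 (mul_ne_zero hμ (inv_ne_zero hn)))
    (X_sub_C_ne_zero ((n : ℂ) * b))) ?_
  simp only [map_mul, div_eq_mul_inv] at h ⊢
  linear_combination h

theorem intertwines_L_of_apply_eq_comp_mul
    (hact : IsOmegaAction L μ b) (hz : ∀ p : ℂ[X], ⁅z, p⁆ = 0) (hf : PhiTau L z n a f)
    (hμ : μ ≠ 0) (hn : (n : ℂ) ≠ 0)
    (hr : a * μ ^ (n - 1) = 1) {ξ : ℂ} {D : ℂ[X] →ₗ[ℂ] ℂ[X]}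
    (hDp : ∀ p, D p = p.comp (C (n : ℂ)⁻¹ * X) * C ξ) (i : ℤ) (p : ℂ[X]) :
    D ⁅L i, p⁆ = ⁅f (L i), D p⁆ := by
  have hscalar : a ^ i * μ ^ (n * i) = μ ^ i := by
    rw [show n * i = (n - 1) * i + i by ring, zpow_add₀ hμ, zpow_mul, ← mul_assoc, ← mul_zpow, hr,
      one_zpow, one_mul]
  have hshift : (X - C (i : ℂ)).comp (C (n : ℂ)⁻¹ * X)
      = (C (n : ℂ)⁻¹ * X).comp (X - C (n * i : ℂ)) := by
    rw [X_sub_C_comp_C_inv_mul_X hn, mul_comp, C_comp, X_comp]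
  rw [hf.lie_apply_L hz, lie_eq_smul_mul_comp (hact i), lie_eq_smul_mul_comp (hact _), map_smul,
    hDp, hDp, mul_comp, mul_comp, comp_assoc, comp_assoc, hshift, X_sub_C_comp_C_inv_mul_X hn,
    C_comp]
  simp only [smul_eq_C_mul, Int.cast_mul, mul_assoc, ← hscalar, map_mul, div_eq_mul_inv]
  ring

end Virasoro

open Polynomial in
theorem stmt_15_general {V : Type*} [LieRing V] [LieAlgebra ℂ V]
    (L : ℤ → V) (C : V)
    (bb : Module.Basis (Option ℤ) ℂ V) (hbL : ∀ i : ℤ, bb (some i) = L i)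
    (hbC : bb none = C)
    [LieRingModule V ℂ[X]] [LieModule ℂ V ℂ[X]]
    (μ b : ℂ) (hμ : μ ≠ 0)
    (hact : ∀ (i : ℤ) (j : ℕ),
      ⁅L i, (X : ℂ[X]) ^ j⁆ = μ ^ i • ((X - Polynomial.C ((i : ℂ) * b)) *
        (X - Polynomial.C (i : ℂ)) ^ j))
    (hactC : ∀ p : ℂ[X], ⁅C, p⁆ = 0)
    (n : ℤ) (hn : n ≠ 0) (a : ℂ)
    (f : V →ₗ[ℂ] V) (hf : PhiTau L C n a f) :
    (∀ δ : ℂ[X] →ₗ[ℂ] ℂ[X], δ ≠ -(LinearMap.id : ℂ[X] →ₗ[ℂ] ℂ[X]) →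
      (∀ (x : V) (p : ℂ[X]),
        δ ⁅x, p⁆ = ⁅f x - x, p⁆ + ⁅x, δ p⁆ + ⁅f x - x, δ p⁆) →
      (a * μ ^ (n - 1) = 1 ∧
        ∃ ξ : ℂ, ∀ j : ℕ, δ ((X : ℂ[X]) ^ j) =
          (ξ / (n : ℂ) ^ j) • (X : ℂ[X]) ^ j - (X : ℂ[X]) ^ j)) ∧
    (a * μ ^ (n - 1) = 1 →
      ∀ (ξ : ℂ) (δ : ℂ[X] →ₗ[ℂ] ℂ[X]),
        (∀ j : ℕ, δ ((X : ℂ[X]) ^ j) =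
          (ξ / (n : ℂ) ^ j) • (X : ℂ[X]) ^ j - (X : ℂ[X]) ^ j) →
        ∀ (x : V) (p : ℂ[X]),
          δ ⁅x, p⁆ = ⁅f x - x, p⁆ + ⁅x, δ p⁆ + ⁅f x - x, δ p⁆) := by
  have hnC : (n : ℂ) ≠ 0 := Int.cast_ne_zero.2 hn
  refine ⟨fun δ hδ hdiff => ?_, fun hr ξ δ hδ x p => ?_⟩
  · have hD := fun x p => (oneDifferential_iff f δ x p).1 (hdiff x p)
    have hDp := apply_eq_comp_mul_of_intertwines hact hactC hf hD
    set D : ℂ[X] →ₗ[ℂ] ℂ[X] := δ + LinearMap.id with hDdef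
    have hD1 : D 1 ≠ 0 := by
      refine fun h0 => hδ (LinearMap.ext fun p => ?_)
      have hp := hDp p
      rw [h0, mul_zero, hDdef, LinearMap.add_apply, LinearMap.id_apply,
        add_eq_zero_iff_eq_neg] at hp
      exact hp
    have hshift := apply_one_eq_smul_comp_of_intertwines hact hactC hf hμ hnC hD
    have hr := eq_one_of_eq_smul_comp_X_sub_C hD1 hshift
    have hconst := eq_C_eval_zero_of_comp_X_sub_C_eq hnC (by simpa [hr] using hshift.symm)
    set ξ := (D 1).eval 0
    refine ⟨hr, ξ, fun j => eq_sub_of_add_eq ?_⟩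
    change D (X ^ j) = _
    rw [hDp, hconst, X_pow_comp, mul_pow, smul_eq_C_mul, div_eq_mul_inv, ← inv_pow, C_mul, C_pow]
    ring
  · set D : ℂ[X] →ₗ[ℂ] ℂ[X] := δ + LinearMap.id
    have hDp : ∀ p : ℂ[X], D p = p.comp (Polynomial.C (n : ℂ)⁻¹ * X) * Polynomial.C ξ :=
      linearMap_apply_eq_comp_mul fun j => by
        change δ (X ^ j) + X ^ j = _
        rw [hδ, sub_add_cancel, mul_pow, smul_eq_C_mul, div_eq_mul_inv, ← inv_pow, C_mul, C_pow]
        ring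
    refine (oneDifferential_iff f δ x p).2 (lie_map_eq_of_basis bb f D (fun o p => ?_) x p)
    cases o with
    | none => rw [hbC, hf.2, smul_lie, hactC, hactC, smul_zero, map_zero]
    | some i => rw [hbL]; exact intertwines_L_of_apply_eq_comp_mul hact hactC hf hμ hnC hr hDp i p

open Polynomial in
/-- 1-differential module structures on `Ω(μ,b) = ℂ[t]` with
`L_i(t^j) = μ^i (t-ib)(t-i)^j` over `(Vir, d_{n,a})`: a nontrivial such structure
forces `aμ^{n-1} = 1` and `δ(t^j) = ξ(t/n)^j - t^j`; conversely if `aμ^{n-1} = 1`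
every such `δ` is a 1-differential module structure. -/
theorem stmt_15 {V : Type*} [LieRing V] [LieAlgebra ℂ V]
    (L : ℤ → V) (C : V)
    (bb : Module.Basis (Option ℤ) ℂ V) (hbL : ∀ i : ℤ, bb (some i) = L i)
    (hbC : bb none = C) (hrel : VirRel L C)
    [LieRingModule V ℂ[X]] [LieModule ℂ V ℂ[X]]
    (μ b : ℂ) (hμ : μ ≠ 0)
    (hact : ∀ (i : ℤ) (j : ℕ),
      ⁅L i, (X : ℂ[X]) ^ j⁆ = μ ^ i • ((X - Polynomial.C ((i : ℂ) * b)) *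
        (X - Polynomial.C (i : ℂ)) ^ j))
    (hactC : ∀ p : ℂ[X], ⁅C, p⁆ = 0)
    (n : ℤ) (hn : n ≠ 0) (a : ℂ) (ha : a ≠ 0)
    (f : V →ₗ[ℂ] V) (hf : PhiTau L C n a f) :
    (∀ δ : ℂ[X] →ₗ[ℂ] ℂ[X], δ ≠ -(LinearMap.id : ℂ[X] →ₗ[ℂ] ℂ[X]) →
      (∀ (x : V) (p : ℂ[X]),
        δ ⁅x, p⁆ = ⁅f x - x, p⁆ + ⁅x, δ p⁆ + ⁅f x - x, δ p⁆) →
      (a * μ ^ (n - 1) = 1 ∧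
        ∃ ξ : ℂ, ∀ j : ℕ, δ ((X : ℂ[X]) ^ j) =
          (ξ / (n : ℂ) ^ j) • (X : ℂ[X]) ^ j - (X : ℂ[X]) ^ j)) ∧
    (a * μ ^ (n - 1) = 1 →
      ∀ (ξ : ℂ) (δ : ℂ[X] →ₗ[ℂ] ℂ[X]),
        (∀ j : ℕ, δ ((X : ℂ[X]) ^ j) =
          (ξ / (n : ℂ) ^ j) • (X : ℂ[X]) ^ j - (X : ℂ[X]) ^ j) →
        ∀ (x : V) (p : ℂ[X]),
          δ ⁅x, p⁆ = ⁅f x - x, p⁆ + ⁅x, δ p⁆ + ⁅f x - x, δ p⁆) :=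
  stmt_15_general L C bb hbL hbC μ b hμ hact hactC n hn a f hf
end

section
/- Let a₁, …, a_r be distinct nonzero complex numbers, a₀ = 0, and A = ℂ[t^{±1}, (t−a₁)^{−1}, …, (t−a_r)^{−1}] ⊆ ℂ(t). If f, g ∈ A satisfy t·f'(t) = g(t)·f(t), then f = c·t^{m₀}·(t−a₁)^{m₁}⋯(t−a_r)^{m_r} for some c ∈ ℂ and integers m₀, m₁, …, m_r. -/
/-!
Write `f = P / D` in lowest terms and `g = Q / E`. Every element of `A` has its poles in
`S = {0, a₁, …, a_r}`, so `D` and `E` have their roots in `S`, and clearing denominators in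
`t f' = g f` gives `t E (D P' - D' P) = Q P D`. If `z ∉ S` were a root of `P` of multiplicity
`n ≥ 1`, then `(t - z)ⁿ` would divide the Wronskian `D P' - D' P`, hence `D P'`, hence `P'`,
whose multiplicity at `z` is only `n - 1`. So the roots of `P` also lie in `S`, and factoring
`P` and `D` into linear factors over `ℂ` gives the claim.
-/

open Polynomial

variable {K : Type*} [Field K]

namespace Polynomial

theorem eq_C_leadingCoeff_mul_prod_X_sub_C_pow [IsAlgClosed K] [DecidableEq K] {p : K[X]}
    (S : Finset K) (hp : p ≠ 0) (hroots : ∀ z, p.IsRoot z → z ∈ S) :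
    p = C p.leadingCoeff * ∏ s ∈ S, (X - C s) ^ p.rootMultiplicity s := by
  conv_lhs => rw [(IsAlgClosed.splits p).eq_prod_roots, prod_multiset_root_eq_finset_root]
  congr 1
  refine Finset.prod_subset (fun z hz => hroots z (isRoot_of_mem_roots
    (Multiset.mem_toFinset.mp hz))) fun z _ hz => ?_
  rw [rootMultiplicity_eq_zero fun h => hz (Multiset.mem_toFinset.mpr (mem_roots'.mpr ⟨hp, h⟩)),
    pow_zero]

theorem not_isRoot_of_mul_wronskian_eq [CharZero K] {P D U Q : K[X]} {z : K} (hP : P ≠ 0)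
    (hU : ¬U.IsRoot z) (hD : ¬D.IsRoot z) (h : U * wronskian D P = Q * P * D) :
    ¬P.IsRoot z := by
  intro hz
  set n := P.rootMultiplicity z
  have hPn : (X - C z) ^ n ∣ P := pow_rootMultiplicity_dvd P z
  have hW : (X - C z) ^ n ∣ wronskian D P :=
    (prime_X_sub_C z).pow_dvd_of_dvd_mul_left n (by rwa [dvd_iff_isRoot])
      (h ▸ (hPn.mul_left Q).mul_right D)
  have hDP' : (X - C z) ^ n ∣ D * derivative P := by
    simpa [wronskian] using dvd_add hW (hPn.mul_left (derivative D))
  have hP' : (X - C z) ^ n ∣ derivative P :=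
    (prime_X_sub_C z).pow_dvd_of_dvd_mul_left n (by rwa [dvd_iff_isRoot]) hDP'
  have hP'0 : derivative P ≠ 0 := by
    rw [Ne, derivative_eq_zero]
    intro hdeg
    rw [eq_C_of_natDegree_eq_zero hdeg, IsRoot, eval_C] at hz
    exact hP (by rw [eq_C_of_natDegree_eq_zero hdeg, hz, map_zero])
  have hle := (le_rootMultiplicity_iff hP'0).mpr hP'
  rw [derivative_rootMultiplicity_of_root hz] at hle
  have hpos := (rootMultiplicity_pos hP).mpr hz
  omega

end Polynomial

namespace RatFunc

/-- `f.denom` is the monic denominator in lowest terms, so its roots are the poles of `f`. -/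
def polesWithin (S : Set K) : Subalgebra K (RatFunc K) where
  carrier := {f | ∀ z, f.denom.IsRoot z → z ∈ S}
  mul_mem' {f g} hf hg z hz := by
    rcases root_mul.mp (hz.dvd (denom_mul_dvd f g)) with h | h
    exacts [hf z h, hg z h]
  add_mem' {f g} hf hg z hz := by
    rcases root_mul.mp (hz.dvd (denom_add_dvd f g)) with h | h
    exacts [hf z h, hg z h]
  algebraMap_mem' c z hz := by
    simp [algebraMap_eq_C, denom_C] at hz

theorem inv_algebraMap_mem_polesWithin {S : Set K} {q : K[X]} (hq : ∀ z, q.IsRoot z → z ∈ S) :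
    (algebraMap K[X] (RatFunc K) q)⁻¹ ∈ polesWithin S := by
  rcases eq_or_ne q 0 with rfl | hq0
  · simp
  intro z hz
  refine hq z (hz.dvd ((denom_dvd hq0).mpr ⟨1, ?_⟩))
  rw [map_one, one_div]

theorem adjoin_le_polesWithin {ι : Type*} (a : ι → K) {S : Set K} (h0 : 0 ∈ S)
    (ha : ∀ i, a i ∈ S) :
    Algebra.adjoin K ({X, X⁻¹} ∪ Set.range fun i => (X - C (a i))⁻¹) ≤ polesWithin S := by
  refine Algebra.adjoin_le ?_
  rintro _ ((rfl | rfl) | ⟨i, rfl⟩)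
  · intro z hz
    simp [denom_X] at hz
  · rw [← algebraMap_X]
    exact inv_algebraMap_mem_polesWithin fun z hz => (by simpa using hz : z = 0) ▸ h0
  · change (X - C (a i))⁻¹ ∈ polesWithin S
    rw [← algebraMap_X, ← algebraMap_C, ← map_sub]
    exact inv_algebraMap_mem_polesWithin fun z hz => root_X_sub_C.mp hz ▸ ha i

theorem derivation_algebraMap_eq_derivative {Der : Derivation K (RatFunc K) (RatFunc K)}
    (hDer : Der X = 1) (p : K[X]) :
    Der (algebraMap K[X] (RatFunc K) p) = algebraMap K[X] (RatFunc K) (derivative p) := by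
  rw [← aeval_X_left_eq_algebraMap, Der.map_aeval, hDer, smul_eq_mul, mul_one,
    aeval_X_left_eq_algebraMap]

theorem mem_of_isRoot_num_of_X_mul_derivation_eq [CharZero K]
    {Der : Derivation K (RatFunc K) (RatFunc K)} (hDer : Der X = 1) {S : Set K} (h0 : 0 ∈ S)
    {f g : RatFunc K} (hf : f ∈ polesWithin S) (hg : g ∈ polesWithin S) (hf0 : f ≠ 0)
    (heq : X * Der f = g * f) {z : K} (hz : f.num.IsRoot z) : z ∈ S := by
  by_contra hzS
  have key : (Polynomial.X * g.denom) * wronskian f.denom f.num = g.num * f.num * f.denom := by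
    apply algebraMap_injective K
    rw [← num_div_denom f, ← num_div_denom g, Der.leibniz_div,
      derivation_algebraMap_eq_derivative hDer, derivation_algebraMap_eq_derivative hDer] at heq
    have hD := algebraMap_ne_zero (denom_ne_zero f)
    have hE := algebraMap_ne_zero (denom_ne_zero g)
    simp only [map_mul, map_sub, wronskian, algebraMap_X, smul_eq_mul] at heq ⊢
    field_simp at heq
    linear_combination heq
  refine not_isRoot_of_mul_wronskian_eq (num_ne_zero hf0) ?_ (fun h => hzS (hf z h)) key hz
  rw [root_mul, not_or]
  exact ⟨fun h => hzS ((by simpa using h : z = 0) ▸ h0), fun h => hzS (hg z h)⟩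

theorem eq_C_mul_prod_X_sub_C_zpow [IsAlgClosed K] [DecidableEq K] (S : Finset K)
    {f : RatFunc K} (hf0 : f ≠ 0) (hnum : ∀ z, f.num.IsRoot z → z ∈ S)
    (hdenom : ∀ z, f.denom.IsRoot z → z ∈ S) :
    ∃ (c : K) (m : K → ℤ), f = C c * ∏ s ∈ S, (X - C s) ^ m s := by
  have hX : ∀ s, (X - C s : RatFunc K) ≠ 0 := fun s => by
    rw [← algebraMap_X, ← algebraMap_C, ← map_sub]
    exact algebraMap_ne_zero (X_sub_C_ne_zero s)
  refine ⟨f.num.leadingCoeff / f.denom.leadingCoeff,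
    fun s => f.num.rootMultiplicity s - f.denom.rootMultiplicity s, ?_⟩
  conv_lhs => rw [← num_div_denom f,
    eq_C_leadingCoeff_mul_prod_X_sub_C_pow S (num_ne_zero hf0) hnum,
    eq_C_leadingCoeff_mul_prod_X_sub_C_pow S (denom_ne_zero f) hdenom]
  simp only [map_mul, map_prod, map_pow, map_sub, algebraMap_X, algebraMap_C, map_div₀,
    zpow_sub₀ (hX _), zpow_natCast, Finset.prod_div_distrib]
  rw [mul_div_mul_comm]

end RatFunc

open RatFunc in
/-- if `f, g ∈ A = ℂ[t^{±1}, (t-a₁)^{-1}, …, (t-a_r)^{-1}]` satisfy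
`t·f' = g·f` (with `Der` the derivation `d/dt` of `ℂ(t)`), then
`f = c·t^{m₀}·∏ᵢ (t-aᵢ)^{mᵢ}`. -/
theorem stmt_16 (r : ℕ) (a : Fin r → ℂ) (hinj : Function.Injective a)
    (hne : ∀ i, a i ≠ 0)
    (Der : Derivation ℂ (RatFunc ℂ) (RatFunc ℂ)) (hDer : Der RatFunc.X = 1)
    (A : Subalgebra ℂ (RatFunc ℂ))
    (hA : A = Algebra.adjoin ℂ
      ({RatFunc.X, (RatFunc.X)⁻¹} ∪ Set.range fun i : Fin r =>
        (RatFunc.X - RatFunc.C (a i))⁻¹))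
    (f g : RatFunc ℂ) (hf : f ∈ A) (hg : g ∈ A)
    (heq : RatFunc.X * Der f = g * f) :
    ∃ (c : ℂ) (m₀ : ℤ) (m : Fin r → ℤ),
      f = RatFunc.C c * RatFunc.X ^ m₀ *
        ∏ i : Fin r, (RatFunc.X - RatFunc.C (a i)) ^ (m i) := by
  classical
  rcases eq_or_ne f 0 with rfl | hf0
  · exact ⟨0, 0, 0, by simp⟩
  set S : Finset ℂ := insert 0 (Finset.univ.image a)
  have hAS : A ≤ polesWithin (S : Set ℂ) :=
    hA ▸ adjoin_le_polesWithin a (by simp [S]) (by simp [S])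
  obtain ⟨c, m, hfm⟩ := eq_C_mul_prod_X_sub_C_zpow S hf0
    (fun _ => mem_of_isRoot_num_of_X_mul_derivation_eq hDer (by simp [S]) (hAS hf) (hAS hg)
      hf0 heq) (hAS hf)
  refine ⟨c, m 0, m ∘ a, ?_⟩
  rw [hfm, Finset.prod_insert (by simpa using hne),
    Finset.prod_image fun i _ j _ h => hinj h, map_zero, sub_zero, mul_assoc]
  rfl
end

section
/- Let ω be a primitive d-th root of unity and b₁,…,b_s ∈ ℂ* such that the elements b_iω^j (1 ≤ i ≤ s, 1 ≤ j ≤ d) are pairwise distinct. Let A = ℂ[t^{±1}, (t − b_iω^j)^{−1} : 1 ≤ i ≤ s, 1 ≤ j ≤ d] ⊆ ℂ(t). Then the subspace A^ω := {f ∈ A : f(ωt) = f(t)} equals ℂ[t^{±d}] + Σ_{k≥1} Σ_{i=1}^s ℂ·f_{i,k}, where f_{i,k}(t) = Σ_{j=1}^{d} (ω^j t − b_i)^{−k}. -/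
/-!
Partial fractions show that `A` is spanned by the Laurent monomials `t ^ n` and the powers
`(t - c) ^ (-k-1)` of its poles `c = b_i ω^j`. Since `σ ^ d = 1`, for `d > 0` a fixed `f` equals
`d⁻¹ • ∑_{m<d} σ^m f`, so it suffices to average the spanning elements: `t ^ n` averages to `0`
unless `d ∣ n` (a geometric sum over `d`-th roots of unity), and `σ^j` carries
`(t - b_i ω^j)⁻¹` to a multiple of `(t - b_i)⁻¹`, whose average is `f_{i,k}`.
For `d = 0` there are no poles, `ω` has infinite order, and the `t ^ n` are eigenvectors of `σ`
for the eigenvalues `ω ^ n`, which differ from `1` unless `n = 0`.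
-/

open Submodule

theorem zpow_neg_natCast_sub_one {G : Type*} [DivisionMonoid G] (x : G) (k : ℕ) :
    x ^ (-(k : ℤ) - 1) = x⁻¹ ^ (k + 1) := by
  rw [← neg_add', zpow_neg, ← Nat.cast_add_one, zpow_natCast, inv_pow]

theorem Finset.sum_range_succ_eq_sum_range_of_eq {M : Type*} [AddCommMonoid M] {f : ℕ → M}
    {n : ℕ} (h : f n = f 0) : ∑ i ∈ range n, f (i + 1) = ∑ i ∈ range n, f i := by
  cases n with
  | zero => simp
  | succ n => rw [sum_range_succ, h, sum_range_succ' f n]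

theorem Module.End.mem_span_image_of_apply_eq_self {K V ι : Type*} [Field K] [AddCommGroup V]
    [Module K V] {φ : Module.End K V} {v : ι → V} {μ : ι → K} (hv : ∀ i, φ (v i) = μ i • v i)
    {x : V} (hx : x ∈ span K (Set.range v)) (hφx : φ x = x) :
    x ∈ span K (v '' {i | μ i = 1}) := by
  have hsplit : span K (Set.range v) =
      span K (v '' {i | μ i = 1}) ⊔ span K (v '' {i | μ i ≠ 1}) := by
    rw [← span_union, ← Set.image_union, show {i | μ i = 1} ∪ {i | μ i ≠ 1} = Set.univ from
      Set.union_compl_self _, Set.image_univ]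
  obtain ⟨y, hy, z, hz, rfl⟩ := mem_sup.1 (hsplit ▸ hx)
  have hy1 : y ∈ φ.eigenspace 1 := by
    refine span_le.2 ?_ hy
    rintro _ ⟨i, hi, rfl⟩
    simp [hv i, show μ i = 1 from hi]
  have hz1 : z ∈ φ.eigenspace 1 := by
    have hyz : y + z ∈ φ.eigenspace 1 := by simpa [mem_eigenspace_iff] using hφx
    simpa using sub_mem hyz hy1
  have hz2 : z ∈ ⨆ μ' ∈ {μ' : K | μ' ≠ 1}, φ.eigenspace μ' := by
    refine span_le.2 ?_ hz
    rintro _ ⟨i, hi, rfl⟩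
    exact (le_biSup φ.eigenspace hi : φ.eigenspace (μ i) ≤ _) (mem_eigenspace_iff.2 (hv i))
  have hz0 : z = 0 := (disjoint_def.1 ((eigenspaces_iSupIndep φ).disjoint_biSup
    (by simp : (1 : K) ∉ {μ' : K | μ' ≠ 1}))) z hz1 hz2
  simpa [hz0] using hy

namespace AlgHom

variable {R A : Type*} [CommSemiring R] [Semiring A] [Algebra R A]

noncomputable def orbitSum (σ : A →ₐ[R] A) (d : ℕ) : A →ₗ[R] A :=
  ∑ m ∈ Finset.range d, (σ ^ m).toLinearMap

variable {σ : A →ₐ[R] A} {d : ℕ}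

theorem orbitSum_apply (y : A) : σ.orbitSum d y = ∑ m ∈ Finset.range d, (σ ^ m) y := by
  simp [orbitSum]

theorem orbitSum_apply_self_apply (h : σ ^ d = 1) (y : A) :
    σ.orbitSum d (σ y) = σ.orbitSum d y := by
  simp only [orbitSum_apply, ← mul_apply, ← pow_succ]
  exact Finset.sum_range_succ_eq_sum_range_of_eq (f := fun m => (σ ^ m) y) (by simp [h])

theorem apply_orbitSum (h : σ ^ d = 1) (y : A) : σ (σ.orbitSum d y) = σ.orbitSum d y := by
  simp only [orbitSum_apply, map_sum, ← mul_apply, ← pow_succ']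
  exact Finset.sum_range_succ_eq_sum_range_of_eq (f := fun m => (σ ^ m) y) (by simp [h])

theorem orbitSum_pow_apply (h : σ ^ d = 1) (m : ℕ) (y : A) :
    σ.orbitSum d ((σ ^ m) y) = σ.orbitSum d y := by
  induction m with
  | zero => simp
  | succ m ih => rw [pow_succ', mul_apply, orbitSum_apply_self_apply h, ih]

theorem orbitSum_of_apply_eq {y : A} (hy : σ y = y) : σ.orbitSum d y = d • y := by
  simp [orbitSum_apply, coe_pow, Function.iterate_fixed hy]

end AlgHom

namespace RatFunc

variable {K : Type*} [Field K]

theorem X_sub_C_ne_zero (c : K) : (X : RatFunc K) - C c ≠ 0 := by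
  rw [sub_ne_zero, ← algebraMap_X, ← algebraMap_C]
  exact fun h => Polynomial.X_ne_C c (algebraMap_injective K h)

theorem C_mul_X_sub_C_mul (a c : K) : C a * X - C (c * a) = C a * (X - C c) := by
  rw [map_mul]; ring

theorem X_mul_inv_X_sub_C (c : K) :
    X * (X - C c)⁻¹ = 1 + C c * (X - C c)⁻¹ := by
  field_simp [X_sub_C_ne_zero c]
  ring

theorem inv_X_mul_inv_X_sub_C {c : K} (hc : c ≠ 0) :
    X⁻¹ * (X - C c)⁻¹ = C c⁻¹ * ((X - C c)⁻¹ - X⁻¹) := by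
  have : (C c : RatFunc K) ≠ 0 := (map_ne_zero C).2 hc
  rw [map_inv₀]
  field_simp [X_sub_C_ne_zero c, X_ne_zero]
  ring

theorem inv_X_sub_C_mul_inv_X_sub_C {c c' : K} (h : c ≠ c') :
    (X - C c)⁻¹ * (X - C c')⁻¹ = C (c' - c)⁻¹ * ((X - C c')⁻¹ - (X - C c)⁻¹) := by
  have : (C (c' - c) : RatFunc K) ≠ 0 := (map_ne_zero C).2 (sub_ne_zero.2 h.symm)
  rw [map_inv₀]
  field_simp [X_sub_C_ne_zero c, X_sub_C_ne_zero c']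
  rw [map_sub]
  ring

theorem algHom_ext {L : Type*} [Semiring L] [Algebra K L] {f g : RatFunc K →ₐ[K] L}
    (h : f X = g X) : f = g :=
  IsLocalization.algHom_ext (nonZeroDivisors (Polynomial K))
    (Polynomial.algHom_ext (by simpa [Algebra.algHom] using h))

section LaurentPoleSpan

variable {ι : Type*} (c : ι → K)

noncomputable def laurentPoleSpan : Submodule K (RatFunc K) :=
  span K {g | (∃ n : ℤ, g = X ^ n) ∨ ∃ i, ∃ k : ℕ, g = (X - C (c i))⁻¹ ^ (k + 1)}

variable {c}

theorem X_zpow_mem_laurentPoleSpan (n : ℤ) : X ^ n ∈ laurentPoleSpan c :=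
  subset_span (Or.inl ⟨n, rfl⟩)

theorem one_mem_laurentPoleSpan : 1 ∈ laurentPoleSpan c := by
  simpa using X_zpow_mem_laurentPoleSpan (c := c) 0

theorem inv_X_sub_C_pow_mem_laurentPoleSpan (i : ι) (k : ℕ) :
    (X - C (c i))⁻¹ ^ k ∈ laurentPoleSpan c := by
  cases k with
  | zero => simpa using one_mem_laurentPoleSpan
  | succ k => exact subset_span (Or.inr ⟨i, k, rfl⟩)

theorem inv_X_sub_C_mem_laurentPoleSpan (i : ι) : (X - C (c i))⁻¹ ∈ laurentPoleSpan c := by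
  simpa using inv_X_sub_C_pow_mem_laurentPoleSpan (c := c) i 1

theorem C_mul_mem_laurentPoleSpan (a : K) {y : RatFunc K} (hy : y ∈ laurentPoleSpan c) :
    C a * y ∈ laurentPoleSpan c := by
  rw [← smul_eq_C_mul]
  exact smul_mem _ a hy

theorem laurentPoleSpan_of_isEmpty [IsEmpty ι] (c : ι → K) :
    laurentPoleSpan c = span K (Set.range fun n : ℤ => X ^ n) := by
  simp [laurentPoleSpan, Set.range, eq_comm]

theorem mul_mem_laurentPoleSpan {a y : RatFunc K} (hX : ∀ n : ℤ, a * X ^ n ∈ laurentPoleSpan c)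
    (hpole : ∀ i (k : ℕ), a * (X - C (c i))⁻¹ ^ (k + 1) ∈ laurentPoleSpan c)
    (hy : y ∈ laurentPoleSpan c) : a * y ∈ laurentPoleSpan c := by
  refine (span_le (p := (laurentPoleSpan c).comap (LinearMap.mulLeft K a))).2 ?_ hy
  rintro _ (⟨n, rfl⟩ | ⟨i, k, rfl⟩)
  exacts [hX n, hpole i k]

theorem X_mul_mem_laurentPoleSpan {y : RatFunc K} (hy : y ∈ laurentPoleSpan c) :
    X * y ∈ laurentPoleSpan c := by
  refine mul_mem_laurentPoleSpan (fun n => ?_) (fun i k => ?_) hy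
  · rw [← zpow_one_add₀ X_ne_zero]
    exact X_zpow_mem_laurentPoleSpan _
  · have : X * (X - C (c i))⁻¹ ^ (k + 1) =
        (X - C (c i))⁻¹ ^ k + C (c i) * (X - C (c i))⁻¹ ^ (k + 1) := by
      rw [pow_succ, ← mul_assoc, mul_comm X, mul_assoc, X_mul_inv_X_sub_C]
      ring
    rw [this]
    exact add_mem (inv_X_sub_C_pow_mem_laurentPoleSpan i k)
      (C_mul_mem_laurentPoleSpan _ (inv_X_sub_C_pow_mem_laurentPoleSpan i _))

theorem inv_X_mul_mem_laurentPoleSpan (hc : ∀ i, c i ≠ 0) {y : RatFunc K}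
    (hy : y ∈ laurentPoleSpan c) : X⁻¹ * y ∈ laurentPoleSpan c := by
  refine mul_mem_laurentPoleSpan (fun n => ?_) (fun i k => ?_) hy
  · rw [← zpow_neg_one, ← zpow_add₀ X_ne_zero]
    exact X_zpow_mem_laurentPoleSpan _
  · induction k with
    | zero =>
      rw [zero_add, pow_one, inv_X_mul_inv_X_sub_C (hc i), mul_sub]
      exact sub_mem (C_mul_mem_laurentPoleSpan _ (inv_X_sub_C_mem_laurentPoleSpan i))
        (C_mul_mem_laurentPoleSpan _ (by simpa using X_zpow_mem_laurentPoleSpan (c := c) (-1)))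
    | succ k ih =>
      have : X⁻¹ * (X - C (c i))⁻¹ ^ (k + 2) = C (c i)⁻¹ * (X - C (c i))⁻¹ ^ (k + 2)
          - C (c i)⁻¹ * (X⁻¹ * (X - C (c i))⁻¹ ^ (k + 1)) := by
        rw [pow_succ' _ (k + 1), ← mul_assoc, inv_X_mul_inv_X_sub_C (hc i)]
        ring
      rw [this]
      exact sub_mem (C_mul_mem_laurentPoleSpan _ (inv_X_sub_C_pow_mem_laurentPoleSpan i _))
        (C_mul_mem_laurentPoleSpan _ ih)

theorem inv_X_sub_C_mul_mem_laurentPoleSpan (hc : ∀ i, c i ≠ 0) (i : ι) {y : RatFunc K}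
    (hy : y ∈ laurentPoleSpan c) : (X - C (c i))⁻¹ * y ∈ laurentPoleSpan c := by
  refine mul_mem_laurentPoleSpan (fun n => ?_) (fun i' k => ?_) hy
  · induction n using Int.induction_on with
    | zero => simpa using inv_X_sub_C_mem_laurentPoleSpan i
    | succ n ih =>
      rw [zpow_add_one₀ X_ne_zero, ← mul_assoc, mul_comm]
      exact X_mul_mem_laurentPoleSpan ih
    | pred n ih =>
      rw [zpow_sub_one₀ X_ne_zero, ← mul_assoc, mul_comm]
      exact inv_X_mul_mem_laurentPoleSpan hc ih
  · by_cases hii' : c i = c i'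
    · rw [hii', ← pow_succ']
      exact inv_X_sub_C_pow_mem_laurentPoleSpan i' _
    induction k with
    | zero =>
      rw [zero_add, pow_one, inv_X_sub_C_mul_inv_X_sub_C hii', mul_sub]
      exact sub_mem (C_mul_mem_laurentPoleSpan _ (inv_X_sub_C_mem_laurentPoleSpan i'))
        (C_mul_mem_laurentPoleSpan _ (inv_X_sub_C_mem_laurentPoleSpan i))
    | succ k ih =>
      have : (X - C (c i))⁻¹ * (X - C (c i'))⁻¹ ^ (k + 2) =
          C (c i' - c i)⁻¹ * (X - C (c i'))⁻¹ ^ (k + 2)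
          - C (c i' - c i)⁻¹ * ((X - C (c i))⁻¹ * (X - C (c i'))⁻¹ ^ (k + 1)) := by
        rw [pow_succ' _ (k + 1), ← mul_assoc, inv_X_sub_C_mul_inv_X_sub_C hii']
        ring
      rw [this]
      exact sub_mem (C_mul_mem_laurentPoleSpan _ (inv_X_sub_C_pow_mem_laurentPoleSpan i' _))
        (C_mul_mem_laurentPoleSpan _ ih)

theorem adjoin_eq_laurentPoleSpan (hc : ∀ i, c i ≠ 0) :
    Subalgebra.toSubmodule (Algebra.adjoin K
      ({X, X⁻¹} ∪ Set.range fun i => (X - C (c i))⁻¹)) = laurentPoleSpan c := by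
  apply le_antisymm
  · intro f hf
    have hmul : ∀ y ∈ laurentPoleSpan c, f * y ∈ laurentPoleSpan c := by
      induction hf using Algebra.adjoin_induction with
      | mem g hg =>
        rcases hg with (rfl | rfl) | ⟨i, rfl⟩
        exacts [fun y => X_mul_mem_laurentPoleSpan, fun y => inv_X_mul_mem_laurentPoleSpan hc,
          fun y => inv_X_sub_C_mul_mem_laurentPoleSpan hc i]
      | algebraMap a =>
        intro y hy
        rw [algebraMap_eq_C]
        exact C_mul_mem_laurentPoleSpan a hy
      | add f g _ _ hf hg => exact fun y hy => add_mul f g y ▸ add_mem (hf y hy) (hg y hy)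
      | mul f g _ _ hf hg => exact fun y hy => (mul_assoc f g y).symm ▸ hf _ (hg y hy)
    simpa using hmul 1 one_mem_laurentPoleSpan
  · refine span_le.2 fun g hg => (Subalgebra.mem_toSubmodule _).2 ?_
    obtain ⟨n, rfl⟩ | ⟨i, k, rfl⟩ := hg
    · induction n using Int.induction_on with
      | zero => simp
      | succ n ih =>
        rw [zpow_add_one₀ X_ne_zero]
        exact mul_mem ih (Algebra.subset_adjoin (Or.inl (Set.mem_insert _ _)))
      | pred n ih =>
        rw [zpow_sub_one₀ X_ne_zero]
        exact mul_mem ih (Algebra.subset_adjoin (Or.inl (Set.mem_insert_of_mem _ rfl)))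
    · exact pow_mem (Algebra.subset_adjoin (Set.mem_union_right _ (Set.mem_range_self i))) (k + 1)

end LaurentPoleSpan

section Substitution

variable {σ : RatFunc K →ₐ[K] RatFunc K} {ω : K}

theorem pow_apply_X (hσ : σ X = C ω * X) (m : ℕ) : (σ ^ m) X = C ω ^ m * X := by
  induction m with
  | zero => simp
  | succ m ih =>
    rw [pow_succ', AlgHom.mul_apply, ih, map_mul, map_pow, hσ, ← algebraMap_eq_C,
      AlgHom.commutes]
    ring

theorem pow_eq_one_of_apply_X {d : ℕ} (hσ : σ X = C ω * X) (hω : ω ^ d = 1) : σ ^ d = 1 :=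
  algHom_ext (by rw [pow_apply_X hσ, ← map_pow, hω, map_one, one_mul, AlgHom.one_apply])

theorem pow_apply_X_zpow (hσ : σ X = C ω * X) (m : ℕ) (n : ℤ) :
    (σ ^ m) (X ^ n) = C ((ω ^ n) ^ m) * X ^ n := by
  rw [map_zpow₀, pow_apply_X hσ, mul_zpow, ← map_pow, ← map_zpow₀, ← zpow_natCast,
    ← zpow_natCast, ← zpow_mul, ← zpow_mul, mul_comm (m : ℤ)]

theorem apply_X_zpow (hσ : σ X = C ω * X) (n : ℤ) : σ (X ^ n) = C (ω ^ n) * X ^ n := by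
  simpa using pow_apply_X_zpow hσ 1 n

theorem pow_apply_inv_X_sub_C_mul_pow (hσ : σ X = C ω * X) (b : K) (j : ℕ) :
    (σ ^ j) (X - C (b * ω ^ j))⁻¹ = C (ω ^ j)⁻¹ * (X - C b)⁻¹ := by
  rw [map_inv₀, map_sub, pow_apply_X hσ, ← algebraMap_eq_C, AlgHom.commutes, algebraMap_eq_C,
    ← map_pow, C_mul_X_sub_C_mul, mul_inv, map_inv₀]

/-- The function `f_{i,k+1}` of the statement, for `b = b_i`. -/
noncomputable def poleOrbitSum (ω b : K) (d k : ℕ) : RatFunc K :=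
  ∑ j ∈ Finset.range d, (C ω ^ (j + 1) * X - C b) ^ (-(k : ℤ) - 1)

theorem poleOrbitSum_eq_orbitSum (hσ : σ X = C ω * X) (b : K) (d k : ℕ) :
    poleOrbitSum ω b d k = σ.orbitSum d (σ ((X - C b)⁻¹ ^ (k + 1))) := by
  simp only [poleOrbitSum, AlgHom.orbitSum_apply, ← AlgHom.mul_apply, ← pow_succ, map_pow,
    map_inv₀, map_sub, pow_apply_X hσ, ← algebraMap_eq_C, AlgHom.commutes,
    zpow_neg_natCast_sub_one]

noncomputable def invariantSpan {ι : Type*} (d : ℕ) (ω : K) (b : ι → K) :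
    Submodule K (RatFunc K) :=
  span K ((Set.range fun k : ℤ => X ^ ((d : ℤ) * k)) ∪
    Set.range fun p : ι × ℕ => poleOrbitSum ω (b p.1) d p.2)

variable {ι : Type*} {d : ℕ} {b : ι → K}

theorem X_zpow_mem_invariantSpan {n : ℤ} (hn : (d : ℤ) ∣ n) : X ^ n ∈ invariantSpan d ω b := by
  obtain ⟨k, rfl⟩ := hn
  exact subset_span (Or.inl ⟨k, rfl⟩)

theorem poleOrbitSum_mem_invariantSpan (i : ι) (k : ℕ) :
    poleOrbitSum ω (b i) d k ∈ invariantSpan d ω b :=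
  subset_span (Or.inr ⟨(i, k), rfl⟩)

theorem invariantSpan_le_laurentPoleSpan (hω : IsPrimitiveRoot ω d) :
    invariantSpan d ω b ≤ laurentPoleSpan fun p : ι × Fin d => b p.1 * ω ^ (p.2 : ℕ) := by
  refine span_le.2 ?_
  rintro _ (⟨k, rfl⟩ | ⟨⟨i, k⟩, rfl⟩)
  · exact X_zpow_mem_laurentPoleSpan _
  refine Submodule.sum_mem _ fun j hj => ?_
  have : NeZero d := ⟨ne_zero_of_lt (Finset.mem_range.1 hj)⟩
  obtain ⟨j', hj', hωj'⟩ := hω.eq_pow_of_pow_eq_one (ξ := (ω ^ (j + 1))⁻¹)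
    (by rw [inv_pow, ← pow_mul, mul_comm, pow_mul, hω.pow_eq_one, one_pow, inv_one])
  have hbi : b i = b i * ω ^ j' * ω ^ (j + 1) := by
    rw [hωj', mul_assoc, inv_mul_cancel₀ (pow_ne_zero _ (hω.ne_zero (NeZero.ne d))), mul_one]
  rw [zpow_neg_natCast_sub_one, ← map_pow, hbi, C_mul_X_sub_C_mul, mul_inv, mul_pow,
    ← map_inv₀, ← map_pow]
  exact C_mul_mem_laurentPoleSpan _ (inv_X_sub_C_pow_mem_laurentPoleSpan
    (c := fun p : ι × Fin d => b p.1 * ω ^ (p.2 : ℕ)) (i, ⟨j', hj'⟩) _)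

theorem apply_eq_self_of_mem_invariantSpan (hσ : σ X = C ω * X) (hω : ω ^ d = 1)
    {f : RatFunc K} (hf : f ∈ invariantSpan d ω b) : σ f = f := by
  refine (span_le (p := LinearMap.eqLocus σ.toLinearMap LinearMap.id)).2 ?_ hf
  rintro _ (⟨k, rfl⟩ | ⟨⟨i, k⟩, rfl⟩)
  · change σ (X ^ ((d : ℤ) * k)) = X ^ ((d : ℤ) * k)
    rw [apply_X_zpow hσ, zpow_mul, zpow_natCast, hω, one_zpow, map_one, one_mul]
  · change σ (poleOrbitSum ω (b i) d k) = poleOrbitSum ω (b i) d k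
    rw [poleOrbitSum_eq_orbitSum hσ]
    exact AlgHom.apply_orbitSum (pow_eq_one_of_apply_X hσ hω) _

theorem orbitSum_mem_invariantSpan (hσ : σ X = C ω * X) (hω : IsPrimitiveRoot ω d)
    {f : RatFunc K} (hf : f ∈ laurentPoleSpan fun p : ι × Fin d => b p.1 * ω ^ (p.2 : ℕ)) :
    σ.orbitSum d f ∈ invariantSpan d ω b := by
  have hσd := pow_eq_one_of_apply_X hσ hω.pow_eq_one
  refine (span_le (p := (invariantSpan d ω b).comap (σ.orbitSum d))).2 ?_ hf
  rintro _ (⟨n, rfl⟩ | ⟨⟨i, j⟩, k, rfl⟩)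
  · change σ.orbitSum d (X ^ n) ∈ invariantSpan d ω b
    simp only [AlgHom.orbitSum_apply, pow_apply_X_zpow hσ, ← Finset.sum_mul, ← map_sum]
    by_cases hn : (d : ℤ) ∣ n
    · rw [← smul_eq_C_mul]
      exact smul_mem _ _ (X_zpow_mem_invariantSpan hn)
    · have hωn : (ω ^ n) ^ d = 1 := by
        rw [← zpow_natCast, ← zpow_mul, mul_comm, zpow_mul, zpow_natCast, hω.pow_eq_one, one_zpow]
      rw [geom_sum_eq (mt (hω.zpow_eq_one_iff_dvd n).1 hn), hωn, sub_self, zero_div, map_zero,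
        zero_mul]
      exact zero_mem _
  · change σ.orbitSum d ((X - C (b i * ω ^ (j : ℕ)))⁻¹ ^ (k + 1)) ∈ invariantSpan d ω b
    rw [← AlgHom.orbitSum_pow_apply hσd j, map_pow, pow_apply_inv_X_sub_C_mul_pow hσ, mul_pow,
      ← map_pow, ← smul_eq_C_mul, LinearMap.map_smul, ← AlgHom.orbitSum_apply_self_apply hσd,
      ← poleOrbitSum_eq_orbitSum hσ]
    exact smul_mem _ _ (poleOrbitSum_mem_invariantSpan i k)

theorem mem_invariantSpan_of_mem_span_X_zpow (hσ : σ X = C ω * X) (hω : IsPrimitiveRoot ω d)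
    {f : RatFunc K} (hf : f ∈ span K (Set.range fun n : ℤ => X ^ n)) (hfix : σ f = f) :
    f ∈ invariantSpan d ω b := by
  have hf1 := Module.End.mem_span_image_of_apply_eq_self (φ := σ.toLinearMap)
    (μ := fun n : ℤ => ω ^ n) (fun n => by simp [smul_eq_C_mul, apply_X_zpow hσ]) hf hfix
  refine span_le.2 ?_ hf1
  rintro _ ⟨n, hn, rfl⟩
  exact X_zpow_mem_invariantSpan ((hω.zpow_eq_one_iff_dvd n).1 hn)

theorem mem_laurentPoleSpan_and_apply_eq_self_iff (hσ : σ X = C ω * X)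
    (hω : IsPrimitiveRoot ω d) {f : RatFunc K} :
    f ∈ laurentPoleSpan (fun p : ι × Fin d => b p.1 * ω ^ (p.2 : ℕ)) ∧ σ f = f ↔
      f ∈ invariantSpan d ω b := by
  refine ⟨fun ⟨hf, hfix⟩ => ?_, fun hf => ⟨invariantSpan_le_laurentPoleSpan hω hf,
    apply_eq_self_of_mem_invariantSpan hσ hω.pow_eq_one hf⟩⟩
  rcases Nat.eq_zero_or_pos d with rfl | hd
  · rw [laurentPoleSpan_of_isEmpty] at hf
    exact mem_invariantSpan_of_mem_span_X_zpow hσ hω hf hfix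
  · have : NeZero d := ⟨hd.ne'⟩
    have : NeZero (d : K) := hω.neZero'
    have hf_eq : f = (d : K)⁻¹ • σ.orbitSum d f := by
      rw [AlgHom.orbitSum_of_apply_eq hfix, ← Nat.cast_smul_eq_nsmul K, smul_smul,
        inv_mul_cancel₀ (NeZero.ne _), one_smul]
    rw [hf_eq]
    exact smul_mem _ _ (orbitSum_mem_invariantSpan hσ hω hf)

end Substitution

end RatFunc

theorem stmt_17_general (d : ℕ) (ω : ℂ) (hω : IsPrimitiveRoot ω d)
    (s : ℕ) (b : Fin s → ℂ) (hb : ∀ i, b i ≠ 0)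
    (A : Subalgebra ℂ (RatFunc ℂ))
    (hA : A = Algebra.adjoin ℂ
      ({RatFunc.X, (RatFunc.X)⁻¹} ∪ Set.range fun p : Fin s × Fin d =>
        (RatFunc.X - RatFunc.C (b p.1 * ω ^ (p.2 : ℕ)))⁻¹))
    (σ : RatFunc ℂ →ₐ[ℂ] RatFunc ℂ) (hσ : σ RatFunc.X = RatFunc.C ω * RatFunc.X) :
    ∀ f : RatFunc ℂ,
      (f ∈ A ∧ σ f = f) ↔
      f ∈ Submodule.span ℂ
        ((Set.range fun k : ℤ => RatFunc.X ^ ((d : ℤ) * k)) ∪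
          (Set.range fun p : Fin s × ℕ =>
            ∑ j ∈ Finset.range d,
              (RatFunc.C ω ^ (j + 1) * RatFunc.X - RatFunc.C (b p.1)) ^
                (-(p.2 : ℤ) - 1))) := by
  intro f
  have hc : ∀ p : Fin s × Fin d, b p.1 * ω ^ (p.2 : ℕ) ≠ 0 :=
    fun p => mul_ne_zero (hb p.1) (pow_ne_zero _ (hω.ne_zero (Fin.pos p.2).ne'))
  rw [← Subalgebra.mem_toSubmodule, hA, RatFunc.adjoin_eq_laurentPoleSpan hc]
  exact RatFunc.mem_laurentPoleSpan_and_apply_eq_self_iff hσ hω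

/-- for a primitive `d`-th root of unity `ω` and
`A = ℂ[t^{±1}, (t-b_iω^j)^{-1}]`, the fixed subspace
`A^ω = {f ∈ A : f(ωt) = f(t)}` equals
`ℂ[t^{±d}] + Σ_{k≥1} Σ_i ℂ·f_{i,k}` with `f_{i,k}(t) = Σ_{j=1}^d (ω^j t - b_i)^{-k}`.
Here `σ` is the substitution `t ↦ ωt` on `ℂ(t)`. -/
theorem stmt_17 (d : ℕ) (ω : ℂ) (hω : IsPrimitiveRoot ω d)
    (s : ℕ) (b : Fin s → ℂ) (hb : ∀ i, b i ≠ 0)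
    (hdist : Function.Injective fun p : Fin s × Fin d => b p.1 * ω ^ (p.2 : ℕ))
    (A : Subalgebra ℂ (RatFunc ℂ))
    (hA : A = Algebra.adjoin ℂ
      ({RatFunc.X, (RatFunc.X)⁻¹} ∪ Set.range fun p : Fin s × Fin d =>
        (RatFunc.X - RatFunc.C (b p.1 * ω ^ (p.2 : ℕ)))⁻¹))
    (σ : RatFunc ℂ →ₐ[ℂ] RatFunc ℂ) (hσ : σ RatFunc.X = RatFunc.C ω * RatFunc.X) :
    ∀ f : RatFunc ℂ,
      (f ∈ A ∧ σ f = f) ↔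
      f ∈ Submodule.span ℂ
        ((Set.range fun k : ℤ => RatFunc.X ^ ((d : ℤ) * k)) ∪
          (Set.range fun p : Fin s × ℕ =>
            ∑ j ∈ Finset.range d,
              (RatFunc.C ω ^ (j + 1) * RatFunc.X - RatFunc.C (b p.1)) ^
                (-(p.2 : ℤ) - 1))) :=
  stmt_17_general d ω hω s b hb A hA σ hσ
end

section
/- Let ω ∈ ℂ* and g ∈ ℂ(t) a nonzero rational function satisfying g(ω t^{−1}) + g(t) = 0. Then g(t) = b · t^k(t² − ω)·∏_{i=1}^{l}(t − λ_i)(λ_i t − ω) / ∏_{i=1}^{m}(t − μ_i)(μ_i t − ω) for some b ∈ ℂ*, k ∈ ℤ, nonnegative integers l, m with m = l + k + 1, and λ_i, μ_i ∈ ℂ* (not necessarily distinct). -/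
/-!
Dividing `g` by `u = (t² - ω)/t`, which `σ` negates, leaves a `σ`-invariant `f`. Put
`s = t + ω/t` (`joukowski ω`). Since `t² - s t + ω = 0`, every rational function is `a + b t` with
`a, b ∈ ℂ(s)`, and `σ (a + b t) = a + b (s - t)`; so the `σ`-invariant ones are exactly the
elements `P(s)/Q(s)` of `ℂ(s)`. Each linear factor of `P` and `Q` becomes
`s - r = (t - λ)(λ t - ω)/(λ t)` for a root `λ` of `λ² - r λ + ω`, which is nonzero as `ω ≠ 0`.
-/

open Polynomial (aeval)
open IntermediateField

namespace RatFunc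

variable {K : Type*} [Field K]

noncomputable def joukowski (ω : K) : K⟮X⟯ := X + C ω * X⁻¹

lemma X_sq_sub_joukowski_mul_X_add_C (ω : K) :
    (X : K⟮X⟯) ^ 2 - joukowski ω * X + C ω = 0 := by
  have := X_ne_zero (K := K)
  rw [joukowski]
  field_simp
  ring

lemma exists_eq_add_mul_X (ω : K) (f : K⟮X⟯) :
    ∃ a ∈ K⟮joukowski ω⟯, ∃ b ∈ K⟮joukowski ω⟯, f = a + b * X := by
  set E := K⟮joukowski ω⟯
  set q : Polynomial E := Polynomial.X ^ 2 -
    Polynomial.C ⟨joukowski ω, mem_adjoin_simple_self K _⟩ * Polynomial.X +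
    Polynomial.C (algebraMap K E ω)
  have hq : q.Monic := by
    unfold q
    monicity!
  have hqX : aeval (X : K⟮X⟯) q = 0 := by
    simpa [q, ← algebraMap_eq_C] using X_sq_sub_joukowski_mul_X_add_C ω
  have hX_integral : IsIntegral E (X : K⟮X⟯) := ⟨q, hq, by rwa [← Polynomial.aeval_def]⟩
  have hf : f ∈ E⟮(X : K⟮X⟯)⟯.toSubalgebra := by
    rw [IntermediateField.adjoin_X]
    trivial
  rw [adjoin_simple_toSubalgebra_of_isAlgebraic hX_integral.isAlgebraic,
    Algebra.adjoin_singleton_eq_range_aeval] at hf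
  obtain ⟨P, rfl⟩ := hf
  have hR : (P %ₘ q).degree ≤ 1 := by
    have hq2 : q.degree = 2 := by
      unfold q
      compute_degree!
    have hlt := Polynomial.degree_modByMonic_lt P hq
    rw [hq2] at hlt
    exact Order.le_of_lt_succ hlt
  refine ⟨(P %ₘ q).coeff 0, SetLike.coe_mem _, (P %ₘ q).coeff 1, SetLike.coe_mem _, ?_⟩
  rw [AlgHom.toRingHom_eq_coe, RingHom.coe_coe, ← Polynomial.aeval_modByMonic_eq_self_of_root hqX]
  conv_lhs => rw [Polynomial.eq_X_add_C_of_degree_le_one hR]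
  simp [add_comm]

lemma X_sq_sub_C_ne_zero (ω : K) : (X : K⟮X⟯) ^ 2 - C ω ≠ 0 := by
  rw [← algebraMap_X, ← algebraMap_C, ← map_pow, ← map_sub]
  exact algebraMap_ne_zero (Polynomial.X_pow_sub_C_ne_zero two_pos ω)

section Involution

variable {ω : K} {σ : K⟮X⟯ →ₐ[K] K⟮X⟯}

lemma map_C_of_algHom (σ : K⟮X⟯ →ₐ[K] K⟮X⟯) (c : K) : σ (C c) = C c := by
  rw [← algebraMap_eq_C, AlgHom.commutes]

lemma map_joukowski (hω : ω ≠ 0) (hσ : σ X = C ω * X⁻¹) :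
    σ (joukowski ω) = joukowski ω := by
  have := X_ne_zero (K := K)
  have : (C ω : K⟮X⟯) ≠ 0 := by simpa using hω
  rw [joukowski, map_add, map_mul, map_inv₀, hσ, map_C_of_algHom]
  field_simp
  ring

lemma map_eq_self_of_mem_adjoin_joukowski (hω : ω ≠ 0) (hσ : σ X = C ω * X⁻¹) {f : K⟮X⟯}
    (hf : f ∈ K⟮joukowski ω⟯) : σ f = f := by
  obtain ⟨p, q, rfl⟩ := (mem_adjoin_simple_iff K f).mp hf
  rw [map_div₀, ← Polynomial.aeval_algHom_apply, ← Polynomial.aeval_algHom_apply,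
    map_joukowski hω hσ]

lemma mem_adjoin_joukowski_of_map_eq (hω : ω ≠ 0) (hσ : σ X = C ω * X⁻¹) {f : K⟮X⟯}
    (hf : σ f = f) : f ∈ K⟮joukowski ω⟯ := by
  obtain ⟨a, ha, b, hb, rfl⟩ := exists_eq_add_mul_X ω f
  rw [map_add, map_mul, map_eq_self_of_mem_adjoin_joukowski hω hσ ha,
    map_eq_self_of_mem_adjoin_joukowski hω hσ hb, hσ] at hf
  suffices b = 0 by simpa [this] using ha
  have hX := X_ne_zero (K := K)
  have : b * ((X ^ 2 - C ω) / X) = 0 := by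
    rw [show (X ^ 2 - C ω) / X = X - C ω * X⁻¹ by field_simp]
    linear_combination -hf
  simpa [X_sq_sub_C_ne_zero, hX] using this

lemma map_X_sq_sub_C_div_X (hω : ω ≠ 0) (hσ : σ X = C ω * X⁻¹) :
    σ ((X ^ 2 - C ω) / X) = -((X ^ 2 - C ω) / X) := by
  have := X_ne_zero (K := K)
  have : (C ω : K⟮X⟯) ≠ 0 := by simpa using hω
  rw [map_div₀, map_sub, map_pow, hσ, map_C_of_algHom]
  field_simp
  ring

end Involution

noncomputable def pairProd {n : ℕ} (ω : K) (lam : Fin n → K) : K⟮X⟯ :=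
  ∏ i, (X - C (lam i)) * (C (lam i) * X - C ω)

section AlgClosed

variable [IsAlgClosed K] {ω : K}

lemma exists_joukowski_sub_C_eq (hω : ω ≠ 0) (r : K) :
    ∃ lam ≠ 0, joukowski ω - C r = (X - C lam) * (C lam * X - C ω) / (C lam * X) := by
  have hdeg :
      (Polynomial.X ^ 2 - Polynomial.C r * Polynomial.X + Polynomial.C ω).degree = 2 := by
    compute_degree!
  obtain ⟨lam, hlam⟩ := IsAlgClosed.exists_root _ (by rw [hdeg]; decide)
  simp only [Polynomial.IsRoot, Polynomial.eval_add, Polynomial.eval_sub, Polynomial.eval_mul,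
    Polynomial.eval_pow, Polynomial.eval_X, Polynomial.eval_C] at hlam
  have hlam0 : lam ≠ 0 := by
    rintro rfl
    exact hω (by simpa using hlam)
  refine ⟨lam, hlam0, ?_⟩
  have hX := X_ne_zero (K := K)
  have : (C lam : K⟮X⟯) ≠ 0 := by simpa using hlam0
  have hC := congrArg (C : K → K⟮X⟯) hlam
  simp only [map_add, map_sub, map_mul, map_pow, map_zero] at hC
  rw [joukowski]
  field_simp
  linear_combination X * hC

lemma exists_aeval_joukowski_eq (hω : ω ≠ 0) {p : Polynomial K} (hp : p ≠ 0) :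
    ∃ c ≠ 0, ∃ n, ∃ lam : Fin n → K, (∀ i, lam i ≠ 0) ∧
      aeval (joukowski ω) p = C c * pairProd ω lam / X ^ n := by
  choose Λ hΛ0 hΛ using exists_joukowski_sub_C_eq hω
  set l := p.roots.toList
  have hroots : aeval (joukowski ω) p =
      C p.leadingCoeff * ∏ i : Fin l.length, (joukowski ω - C l[i]) := by
    conv_lhs => rw [(IsAlgClosed.splits p).eq_prod_roots]
    simp only [Fin.getElem_fin]
    rw [Fin.prod_univ_fun_getElem l (fun r => joukowski ω - C r), ← Multiset.prod_coe,
      ← Multiset.map_coe, Multiset.coe_toList]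
    simp [map_multiset_prod, algebraMap_eq_C]
  have hΛprod : ∏ i : Fin l.length, Λ l[i] ≠ 0 := Finset.prod_ne_zero_iff.mpr fun i _ => hΛ0 _
  refine ⟨p.leadingCoeff / ∏ i : Fin l.length, Λ l[i], div_ne_zero (by simpa using hp) hΛprod,
    l.length, fun i => Λ l[i], fun i => hΛ0 _, ?_⟩
  have hden : ∏ i : Fin l.length, C (Λ l[i]) * X =
      C (∏ i : Fin l.length, Λ l[i]) * X ^ l.length := by
    rw [Finset.prod_mul_distrib, map_prod, Finset.prod_const, Finset.card_univ, Fintype.card_fin]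
  rw [hroots, Finset.prod_congr rfl fun i _ => hΛ l[i], Finset.prod_div_distrib, hden, pairProd,
    map_div₀]
  have hX := X_ne_zero (K := K)
  have : (C (∏ i : Fin l.length, Λ l[i]) : K⟮X⟯) ≠ 0 := by simpa using hΛprod
  field_simp

lemma exists_eq_of_mem_adjoin_joukowski (hω : ω ≠ 0) {f : K⟮X⟯} (hf : f ∈ K⟮joukowski ω⟯)
    (hf0 : f ≠ 0) :
    ∃ c ≠ 0, ∃ (l m : ℕ) (lam : Fin l → K) (mu : Fin m → K), (∀ i, lam i ≠ 0) ∧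
      (∀ i, mu i ≠ 0) ∧ f = C c * X ^ ((m : ℤ) - l) * pairProd ω lam / pairProd ω mu := by
  obtain ⟨p, q, rfl⟩ := (mem_adjoin_simple_iff K f).mp hf
  have hp : p ≠ 0 := by rintro rfl; simp at hf0
  have hq : q ≠ 0 := by rintro rfl; simp at hf0
  obtain ⟨c, hc, l, lam, hlam, hpc⟩ := exists_aeval_joukowski_eq hω hp
  obtain ⟨d, hd, m, mu, hmu, hqd⟩ := exists_aeval_joukowski_eq hω hq
  refine ⟨c / d, div_ne_zero hc hd, l, m, lam, mu, hlam, hmu, ?_⟩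
  have hX := X_ne_zero (K := K)
  have : (C d : K⟮X⟯) ≠ 0 := by simpa using hd
  rw [hpc, hqd, zpow_sub₀ hX, zpow_natCast, zpow_natCast, map_div₀]
  field_simp

end AlgClosed

end RatFunc

open RatFunc in
/-- if `g ∈ ℂ(t)` is nonzero and `g(ωt^{-1}) + g(t) = 0` (where `σ`
is the substitution `t ↦ ωt^{-1}`), then
`g = b · t^k(t²-ω)·∏ᵢ(t-λᵢ)(λᵢt-ω) / ∏ᵢ(t-μᵢ)(μᵢt-ω)` with `m = l + k + 1`. -/
theorem stmt_18 (ω : ℂ) (hω : ω ≠ 0)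
    (σ : RatFunc ℂ →ₐ[ℂ] RatFunc ℂ)
    (hσ : σ RatFunc.X = RatFunc.C ω * (RatFunc.X)⁻¹)
    (g : RatFunc ℂ) (hg : g ≠ 0) (heq : σ g + g = 0) :
    ∃ (b : ℂ) (_ : b ≠ 0) (k : ℤ) (l m : ℕ) (_ : (m : ℤ) = (l : ℤ) + k + 1)
      (lam : Fin l → ℂ) (_ : ∀ i, lam i ≠ 0) (mu : Fin m → ℂ) (_ : ∀ i, mu i ≠ 0),
      g = RatFunc.C b * RatFunc.X ^ k * (RatFunc.X ^ 2 - RatFunc.C ω) *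
          (∏ i : Fin l, (RatFunc.X - RatFunc.C (lam i)) *
            (RatFunc.C (lam i) * RatFunc.X - RatFunc.C ω)) /
          (∏ i : Fin m, (RatFunc.X - RatFunc.C (mu i)) *
            (RatFunc.C (mu i) * RatFunc.X - RatFunc.C ω)) := by
  have hX := X_ne_zero (K := ℂ)
  have hu : (X ^ 2 - C ω) / X ≠ 0 := div_ne_zero (X_sq_sub_C_ne_zero ω) hX
  have hσf : σ (g / ((X ^ 2 - C ω) / X)) = g / ((X ^ 2 - C ω) / X) := by
    rw [map_div₀, map_X_sq_sub_C_div_X hω hσ, eq_neg_of_add_eq_zero_left heq]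
    exact neg_div_neg_eq _ _
  obtain ⟨c, hc, l, m, lam, mu, hlam, hmu, hf⟩ := exists_eq_of_mem_adjoin_joukowski hω
    (mem_adjoin_joukowski_of_map_eq hω hσ hσf) (div_ne_zero hg hu)
  refine ⟨c, hc, (m : ℤ) - l - 1, l, m, by ring, lam, hlam, mu, hmu, ?_⟩
  rw [← div_mul_cancel₀ g hu, hf, zpow_sub_one₀ hX, pairProd, pairProd]
  ring
end

section
/- Let A_{α,β} be the non-weight Virasoro module on A = ℂ[t^{±1}, (t−a₁)^{−1}, …, (t−a_r)^{−1}] with action L_i·f = (∂ + α + iβ)(t^i f), where ∂ = t d/dt, α ∈ ℂ(t)∖ℂ with pole set {a₁,…,a_r}, and β ∈ ℂ. If (A_{α,β}, δ) is a 1-differential module over (Vir, d_{n,a}) with Δ := δ + id ≠ 0, then Δ(t^i f) = a^i t^{ni} Δ(f) for all i ∈ ℤ and f ∈ A_{α,β}; consequently Δ(f) = f(at^n)·Δ(1) for all f ∈ A_{α,β}. -/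
/-- The action of `L_i` on `A_{α,β} ⊆ ℂ(t)`:
`L_i·f = (∂ + α + iβ)(t^i f)` where `∂ = t d/dt` is a derivation with `∂t = t`. -/
noncomputable def virAct (Der : Derivation ℂ (RatFunc ℂ) (RatFunc ℂ))
    (α : RatFunc ℂ) (β : ℂ) (i : ℤ) (f : RatFunc ℂ) : RatFunc ℂ :=
  Der (RatFunc.X ^ i * f) + (α + RatFunc.C ((i : ℂ) * β)) * (RatFunc.X ^ i * f)

/-!
Write `Δ = δ + id`. The differential-module condition reads `n Δ(L_i f) = a^i L_{ni} Δ(f)`.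
Comparing it with its case `i = 0` applied to `t^i f` shows that the defect
`E_i(f) = Δ(t^i f) - a^i t^{ni} Δ(f)` is an eigenvector of `L_0 = ∂ + α` with eigenvalue `-niβ`,
while `a^i t^{ni} E_j(f)` has eigenvalue `ni - njβ`. The cocycle identity
`E_{i+j}(f) = E_i(t^j f) + a^i t^{ni} E_j(f)` with `i = j` (or `i = -j` when `β = -1`) writes
the latter as a difference of eigenvectors for other eigenvalues, so `E_j(f) = 0`.

Thus `Δ(t g) = σ(t) Δ(g)` on `A`. The elements `x ∈ A` with `Δ(x g) = σ(x) Δ(g)` for all `g ∈ A`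
form a subalgebra containing the inverses in `A` of its elements, hence all of `A`, and `g = 1`
gives `Δ(f) = f(at^n) Δ(1)`.
-/

theorem Module.End.eq_zero_of_eq_add_of_mem_eigenspace {K M : Type*} [Field K]
    [AddCommGroup M] [Module K M] (T : Module.End K M) {c₁ c₂ c₃ : K} {v₁ v₂ v₃ : M}
    (h₁ : v₁ ∈ T.eigenspace c₁) (h₂ : v₂ ∈ T.eigenspace c₂) (h₃ : v₃ ∈ T.eigenspace c₃)
    (h : v₁ = v₂ + v₃) (h₁₃ : c₁ ≠ c₃) (h₂₃ : c₂ ≠ c₃) : v₃ = 0 := by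
  have hv₃ : v₃ ∈ ⨆ (c) (_ : c ≠ c₃), T.eigenspace c := by
    rw [eq_sub_of_add_eq' h.symm]
    exact sub_mem (Submodule.mem_iSup_of_mem c₁ (Submodule.mem_iSup_of_mem h₁₃ h₁))
      (Submodule.mem_iSup_of_mem c₂ (Submodule.mem_iSup_of_mem h₂₃ h₂))
  exact Submodule.disjoint_def.mp (iSupIndep_def.mp T.eigenspaces_iSupIndep c₃) v₃ h₃ hv₃

namespace Subalgebra

variable {R S T : Type*} [CommSemiring R] [CommSemiring S] [Semiring T] [Algebra R S]
  [Algebra R T]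

def twistedMultipliers (A : Subalgebra R S) (σ : S →ₐ[R] T) (Δ : S →ₗ[R] T) :
    Subalgebra R S where
  carrier := {x | x ∈ A ∧ ∀ g ∈ A, Δ (x * g) = σ x * Δ g}
  mul_mem' := by
    rintro x y ⟨hxA, hx⟩ ⟨hyA, hy⟩
    refine ⟨mul_mem hxA hyA, fun g hg => ?_⟩
    rw [mul_assoc, hx _ (mul_mem hyA hg), hy g hg, map_mul, mul_assoc]
  add_mem' := by
    rintro x y ⟨hxA, hx⟩ ⟨hyA, hy⟩
    refine ⟨add_mem hxA hyA, fun g hg => ?_⟩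
    rw [add_mul, map_add, hx g hg, hy g hg, map_add, add_mul]
  algebraMap_mem' c := by
    refine ⟨A.algebraMap_mem c, fun g _ => ?_⟩
    rw [← Algebra.smul_def, map_smul, AlgHom.commutes, Algebra.smul_def]

variable {A : Subalgebra R S} {σ : S →ₐ[R] T} {Δ : S →ₗ[R] T}

theorem mem_twistedMultipliers_of_mul_eq_one {u w : S} (hu : u ∈ A.twistedMultipliers σ Δ)
    (hw : w ∈ A) (huw : u * w = 1) : w ∈ A.twistedMultipliers σ Δ := by
  refine ⟨hw, fun g hg => ?_⟩
  have h : Δ g = σ u * Δ (w * g) := by rw [← hu.2 _ (mul_mem hw hg), ← mul_assoc, huw, one_mul]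
  rw [h, ← mul_assoc, ← map_mul, mul_comm w u, huw, map_one, one_mul]

theorem apply_eq_mul_apply_one_of_le_twistedMultipliers
    (hA : A ≤ A.twistedMultipliers σ Δ) {f : S} (hf : f ∈ A) : Δ f = σ f * Δ 1 := by
  simpa using (hA hf).2 1 A.one_mem

end Subalgebra

theorem Subalgebra.zpow_mem_of_inv_mem {R L : Type*} [CommSemiring R] [DivisionRing L]
    [Algebra R L] {A : Subalgebra R L} {x : L} (hx : x ∈ A) (hx' : x⁻¹ ∈ A) (i : ℤ) :
    x ^ i ∈ A := by
  cases i with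
  | ofNat k => simpa using pow_mem hx k
  | negSucc k => simpa [zpow_negSucc, inv_pow] using pow_mem hx' (k + 1)

theorem RatFunc.adjoin_le_twistedMultipliers {K T ι : Type*} [Field K] [Semiring T] [Algebra K T]
    {σ : RatFunc K →ₐ[K] T} {Δ : RatFunc K →ₗ[K] T} (av : ι → K) {A : Subalgebra K (RatFunc K)}
    (hA : A = Algebra.adjoin K ({X, X⁻¹} ∪ Set.range fun k => (X - C (av k))⁻¹))
    (hX : ∀ f ∈ A, Δ (X * f) = σ X * Δ f) : A ≤ A.twistedMultipliers σ Δ := by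
  have hgen {x : RatFunc K} (hx : x ∈ ({X, X⁻¹} ∪ Set.range fun k => (X - C (av k))⁻¹)) :
      x ∈ A := hA ▸ Algebra.subset_adjoin hx
  have hXM : X ∈ A.twistedMultipliers σ Δ := ⟨hgen (by simp), hX⟩
  calc A = Algebra.adjoin K _ := hA
    _ ≤ A.twistedMultipliers σ Δ := by
      rw [Algebra.adjoin_le_iff]
      rintro x ((rfl | rfl) | ⟨k, rfl⟩)
      · exact hXM
      · exact Subalgebra.mem_twistedMultipliers_of_mul_eq_one hXM (hgen (by simp))
          (mul_inv_cancel₀ X_ne_zero)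
      · have hXk : X - C (av k) ≠ 0 := by
          rw [← algebraMap_X, ← algebraMap_C, ← map_sub]
          exact algebraMap_ne_zero (Polynomial.X_sub_C_ne_zero _)
        exact Subalgebra.mem_twistedMultipliers_of_mul_eq_one
          (sub_mem hXM (by simpa using (A.twistedMultipliers σ Δ).algebraMap_mem (av k)))
          (hgen (by simp)) (mul_inv_cancel₀ hXk)

open RatFunc

noncomputable def twistedDer (Der : Derivation ℂ (RatFunc ℂ) (RatFunc ℂ)) (α : RatFunc ℂ) :
    Module.End ℂ (RatFunc ℂ) :=
  Der.toLinearMap + LinearMap.mulLeft ℂ α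

noncomputable def mulDefect (Δ : RatFunc ℂ →ₗ[ℂ] RatFunc ℂ) (n : ℤ) (a : ℂ) (i : ℤ)
    (f : RatFunc ℂ) : RatFunc ℂ :=
  Δ (X ^ i * f) - a ^ i • (X ^ (n * i) * Δ f)

section

variable {Der : Derivation ℂ (RatFunc ℂ) (RatFunc ℂ)} {α : RatFunc ℂ} {β : ℂ} {n : ℤ} {a : ℂ}
  {Δ : RatFunc ℂ →ₗ[ℂ] RatFunc ℂ}

theorem twistedDer_apply (f : RatFunc ℂ) : twistedDer Der α f = Der f + α * f := rfl

theorem virAct_zero (f : RatFunc ℂ) : virAct Der α β 0 f = twistedDer Der α f := by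
  simp [virAct, twistedDer_apply]

theorem virAct_add (i : ℤ) (f g : RatFunc ℂ) :
    virAct Der α β i (f + g) = virAct Der α β i f + virAct Der α β i g := by
  simp only [virAct, mul_add, map_add]
  abel

theorem twistedDer_zpow_mul (hDer : Der X = X) (i : ℤ) (f : RatFunc ℂ) :
    twistedDer Der α (X ^ i * f) = X ^ i * (twistedDer Der α f + (i : ℂ) • f) := by
  have hX : Der (X ^ i) = (i : ℂ) • X ^ i := by
    rw [Derivation.leibniz_zpow, hDer, smul_eq_mul, ← zpow_add_one₀ X_ne_zero, sub_add_cancel,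
      Int.cast_smul_eq_zsmul]
  simp only [twistedDer_apply, Derivation.leibniz, hX, smul_eq_mul, smul_eq_C_mul]
  ring

theorem virAct_eq_zpow_mul (hDer : Der X = X) (i : ℤ) (f : RatFunc ℂ) :
    virAct Der α β i f = X ^ i * (twistedDer Der α f + ((i : ℂ) * (1 + β)) • f) := by
  have h := twistedDer_zpow_mul (α := α) hDer i f
  rw [twistedDer_apply] at h
  rw [virAct, add_mul, ← add_assoc, h]
  simp only [smul_eq_C_mul, map_mul, map_add, map_one]
  ring

theorem zpow_mul_mem_eigenspace (hDer : Der X = X) {c : ℂ} {w : RatFunc ℂ}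
    (hw : w ∈ (twistedDer Der α).eigenspace c) (k : ℤ) :
    X ^ k * w ∈ (twistedDer Der α).eigenspace (k + c) := by
  rw [Module.End.mem_eigenspace_iff] at hw ⊢
  rw [twistedDer_zpow_mul hDer, hw]
  simp only [smul_eq_C_mul, map_add, map_intCast]
  ring

theorem mulDefect_zero (f : RatFunc ℂ) : mulDefect Δ n a 0 f = 0 := by
  simp [mulDefect]

theorem mulDefect_add (ha : a ≠ 0) (i j : ℤ) (f : RatFunc ℂ) :
    mulDefect Δ n a (i + j) f =
      mulDefect Δ n a i (X ^ j * f) + a ^ i • (X ^ (n * i) * mulDefect Δ n a j f) := by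
  have hX : X ^ (i + j) * f = X ^ i * (X ^ j * f) := by
    rw [zpow_add₀ (X_ne_zero (K := ℂ)), mul_assoc]
  rw [mulDefect, mulDefect, mulDefect, hX]
  simp only [zpow_add₀ (X_ne_zero (K := ℂ)), zpow_add₀ ha, mul_add, smul_eq_C_mul, map_mul]
  ring

theorem smul_add_id_virAct {δ : RatFunc ℂ →ₗ[ℂ] RatFunc ℂ} (hn : n ≠ 0) {i : ℤ} {f : RatFunc ℂ}
    (h : δ (virAct Der α β i f) =
      ((a ^ i / (n : ℂ)) • virAct Der α β (n * i) f - virAct Der α β i f) +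
      virAct Der α β i (δ f) +
      ((a ^ i / (n : ℂ)) • virAct Der α β (n * i) (δ f) - virAct Der α β i (δ f))) :
    (n : ℂ) • (δ (virAct Der α β i f) + virAct Der α β i f) =
      a ^ i • virAct Der α β (n * i) (δ f + f) := by
  have hc : (n : ℂ) * (a ^ i / n) = a ^ i := mul_div_cancel₀ _ (Int.cast_ne_zero.2 hn)
  calc (n : ℂ) • (δ (virAct Der α β i f) + virAct Der α β i f)
      = ((n : ℂ) * (a ^ i / n)) • (virAct Der α β (n * i) (δ f) + virAct Der α β (n * i) f) := by
        rw [h]; module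
    _ = a ^ i • virAct Der α β (n * i) (δ f + f) := by rw [hc, virAct_add]

theorem mulDefect_mem_eigenspace (hDer : Der X = X) {i : ℤ} {f : RatFunc ℂ}
    (h₀ : (n : ℂ) • Δ (twistedDer Der α (X ^ i * f)) = twistedDer Der α (Δ (X ^ i * f)))
    (hᵢ : (n : ℂ) • Δ (virAct Der α β i f) = a ^ i • virAct Der α β (n * i) (Δ f)) :
    mulDefect Δ n a i f ∈ (twistedDer Der α).eigenspace (-(n * i * β)) := by
  rw [twistedDer_zpow_mul hDer, mul_add, mul_smul_comm, map_add, map_smul] at h₀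
  rw [virAct_eq_zpow_mul hDer, virAct_eq_zpow_mul hDer, mul_add, mul_smul_comm, map_add,
    map_smul] at hᵢ
  rw [Module.End.mem_eigenspace_iff, mulDefect, map_sub, map_smul, twistedDer_zpow_mul hDer]
  simp only [smul_eq_C_mul, Int.cast_mul, map_mul, map_add, map_neg, map_one] at h₀ hᵢ ⊢
  linear_combination hᵢ - h₀

theorem mulDefect_eq_zero (hDer : Der X = X) (hn : n ≠ 0) (ha : a ≠ 0)
    {A : Subalgebra ℂ (RatFunc ℂ)} (hXA : ∀ (i : ℤ), ∀ f ∈ A, X ^ i * f ∈ A)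
    (hΔ : ∀ (i : ℤ), ∀ f ∈ A,
      (n : ℂ) • Δ (virAct Der α β i f) = a ^ i • virAct Der α β (n * i) (Δ f))
    {j : ℤ} (hj : j ≠ 0) {f : RatFunc ℂ} (hf : f ∈ A) : mulDefect Δ n a j f = 0 := by
  set T := twistedDer Der α
  have hE : ∀ (i : ℤ), ∀ g ∈ A, mulDefect Δ n a i g ∈ T.eigenspace (-(n * i * β)) :=
    fun i g hg => mulDefect_mem_eigenspace hDer
      (by simpa [virAct_zero] using hΔ 0 _ (hXA i g hg)) (hΔ i g hg)
  have hshift : ∀ i : ℤ, a ^ i • (X ^ (n * i) * mulDefect Δ n a j f) ∈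
      T.eigenspace (n * i - n * j * β) := by
    intro i
    convert Submodule.smul_mem _ (a ^ i) (zpow_mul_mem_eigenspace hDer (hE j f hf) (n * i))
      using 2
    push_cast
    ring
  have hnj : (n : ℂ) * j ≠ 0 := mul_ne_zero (Int.cast_ne_zero.2 hn) (Int.cast_ne_zero.2 hj)
  suffices ∃ i : ℤ, a ^ i • (X ^ (n * i) * mulDefect Δ n a j f) = 0 by
    obtain ⟨i, hi⟩ := this
    simpa [zpow_ne_zero, ha, X_ne_zero] using hi
  rcases eq_or_ne β (-1) with rfl | hβ
  · have hne : -((n : ℂ) * (-j : ℤ) * -1) ≠ n * (-j : ℤ) - n * j * -1 := by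
      push_cast
      exact fun h => hnj (by linear_combination -h)
    refine ⟨-j, T.eq_zero_of_eq_add_of_mem_eigenspace (zero_mem _) (hE (-j) _ (hXA j f hf))
      (hshift (-j)) ?_ hne hne⟩
    rw [← mulDefect_add ha, neg_add_cancel, mulDefect_zero]
  · refine ⟨j, T.eq_zero_of_eq_add_of_mem_eigenspace (hE (j + j) f hf) (hE j _ (hXA j f hf))
      (hshift j) (mulDefect_add ha j j f) ?_ ?_⟩
    · push_cast
      intro h
      have h' : (n : ℂ) * j * (β + 1) = 0 := by linear_combination -h
      exact hβ (eq_neg_of_add_eq_zero_left ((mul_eq_zero.1 h').resolve_left hnj))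
    · exact fun h => hnj (by linear_combination -h)

theorem apply_zpow_mul (hDer : Der X = X) (hn : n ≠ 0) (ha : a ≠ 0)
    {A : Subalgebra ℂ (RatFunc ℂ)} (hXA : ∀ (i : ℤ), ∀ f ∈ A, X ^ i * f ∈ A)
    (hΔ : ∀ (i : ℤ), ∀ f ∈ A,
      (n : ℂ) • Δ (virAct Der α β i f) = a ^ i • virAct Der α β (n * i) (Δ f))
    (i : ℤ) {f : RatFunc ℂ} (hf : f ∈ A) : Δ (X ^ i * f) = a ^ i • (X ^ (n * i) * Δ f) := by
  rcases eq_or_ne i 0 with rfl | hi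
  · simp
  · exact sub_eq_zero.1 (mulDefect_eq_zero hDer hn ha hXA hΔ hi hf)

end

theorem stmt_19_general
    (r : ℕ) (av : Fin r → ℂ)
    (A : Subalgebra ℂ (RatFunc ℂ))
    (hA : A = Algebra.adjoin ℂ
      ({RatFunc.X, (RatFunc.X)⁻¹} ∪ Set.range fun i : Fin r =>
        (RatFunc.X - RatFunc.C (av i))⁻¹))
    (Der : Derivation ℂ (RatFunc ℂ) (RatFunc ℂ)) (hDer : Der RatFunc.X = RatFunc.X)
    (α : RatFunc ℂ)
    (β : ℂ)
    (n : ℤ) (hn : n ≠ 0) (a : ℂ) (ha : a ≠ 0)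
    (δ : RatFunc ℂ →ₗ[ℂ] RatFunc ℂ)
    -- the 1-differential module condition over (Vir, d_{n,a}) on the basis L_i:
    (hdm : ∀ (i : ℤ) (f : RatFunc ℂ), f ∈ A →
      δ (virAct Der α β i f) =
        ((a ^ i / (n : ℂ)) • virAct Der α β (n * i) f - virAct Der α β i f) +
        virAct Der α β i (δ f) +
        ((a ^ i / (n : ℂ)) • virAct Der α β (n * i) (δ f) - virAct Der α β i (δ f)))
    -- σ is the substitution t ↦ a t^n:
    (σ : RatFunc ℂ →ₐ[ℂ] RatFunc ℂ)
    (hσ : σ RatFunc.X = RatFunc.C a * RatFunc.X ^ n) :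
    (∀ (i : ℤ) (f : RatFunc ℂ), f ∈ A →
        δ (RatFunc.X ^ i * f) + RatFunc.X ^ i * f =
          a ^ i • (RatFunc.X ^ (n * i) * (δ f + f))) ∧
    (∀ f ∈ A, δ f + f = σ f * (δ 1 + 1)) := by
  have hXA : ∀ (i : ℤ), ∀ f ∈ A, X ^ i * f ∈ A := fun i f hf =>
    mul_mem (Subalgebra.zpow_mem_of_inv_mem (hA ▸ Algebra.subset_adjoin (by simp))
      (hA ▸ Algebra.subset_adjoin (by simp)) i) hf
  let Δ : RatFunc ℂ →ₗ[ℂ] RatFunc ℂ := δ + LinearMap.id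
  have hmul (i : ℤ) {f : RatFunc ℂ} (hf : f ∈ A) : Δ (X ^ i * f) = a ^ i • (X ^ (n * i) * Δ f) :=
    apply_zpow_mul hDer hn ha hXA (fun i f hf => smul_add_id_virAct hn (hdm i f hf)) i hf
  have hX : ∀ f ∈ A, Δ (X * f) = σ X * Δ f := fun f hf => by
    simpa [hσ, smul_eq_C_mul, mul_assoc] using hmul 1 hf
  exact ⟨fun i f hf => hmul i hf, fun f hf =>
    Subalgebra.apply_eq_mul_apply_one_of_le_twistedMultipliers
      (RatFunc.adjoin_le_twistedMultipliers av hA hX) hf⟩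

/-- for a 1-differential module structure on `A_{α,β}` over
`(Vir, d_{n,a})` with `Δ = δ + id ≠ 0`, one has `Δ(t^i f) = a^i t^{ni} Δ(f)`, and
consequently `Δ(f) = f(at^n)·Δ(1)` (with `σ` the substitution `t ↦ at^n`). -/
theorem stmt_19 {V : Type*} [LieRing V] [LieAlgebra ℂ V]
    (L : ℤ → V) (C : V)
    (bb : Module.Basis (Option ℤ) ℂ V) (hbL : ∀ i : ℤ, bb (some i) = L i)
    (hbC : bb none = C) (hrel : VirRel L C)
    (r : ℕ) (av : Fin r → ℂ) (hinj : Function.Injective av) (hne : ∀ i, av i ≠ 0)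
    (A : Subalgebra ℂ (RatFunc ℂ))
    (hA : A = Algebra.adjoin ℂ
      ({RatFunc.X, (RatFunc.X)⁻¹} ∪ Set.range fun i : Fin r =>
        (RatFunc.X - RatFunc.C (av i))⁻¹))
    (Der : Derivation ℂ (RatFunc ℂ) (RatFunc ℂ)) (hDer : Der RatFunc.X = RatFunc.X)
    (α : RatFunc ℂ) (hαA : α ∈ A) (hα : α ∉ Set.range (RatFunc.C (K := ℂ)))
    (β : ℂ)
    (n : ℤ) (hn : n ≠ 0) (a : ℂ) (ha : a ≠ 0)
    (δ : RatFunc ℂ →ₗ[ℂ] RatFunc ℂ) (hδA : ∀ f ∈ A, δ f ∈ A)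
    -- the 1-differential module condition over (Vir, d_{n,a}) on the basis L_i:
    (hdm : ∀ (i : ℤ) (f : RatFunc ℂ), f ∈ A →
      δ (virAct Der α β i f) =
        ((a ^ i / (n : ℂ)) • virAct Der α β (n * i) f - virAct Der α β i f) +
        virAct Der α β i (δ f) +
        ((a ^ i / (n : ℂ)) • virAct Der α β (n * i) (δ f) - virAct Der α β i (δ f)))
    -- Δ = δ + id is nonzero on A:
    (hΔ : ∃ f ∈ A, δ f + f ≠ 0)
    -- σ is the substitution t ↦ a t^n:
    (σ : RatFunc ℂ →ₐ[ℂ] RatFunc ℂ)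
    (hσ : σ RatFunc.X = RatFunc.C a * RatFunc.X ^ n) :
    (∀ (i : ℤ) (f : RatFunc ℂ), f ∈ A →
        δ (RatFunc.X ^ i * f) + RatFunc.X ^ i * f =
          a ^ i • (RatFunc.X ^ (n * i) * (δ f + f))) ∧
    (∀ f ∈ A, δ f + f = σ f * (δ 1 + 1)) :=
  stmt_19_general r av A hA Der hDer α β n hn a ha δ hdm σ hσ
end
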